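/- arXiv:1502.01573 — 5 statements merged into one kernel-verified Lean document; each statement's English description precedes it below -/
import Mathlib

section
/- Let T be an n×n complex matrix that is nilpotent and satisfies ‖T‖ = 1 and ‖T^(n−1)‖ = 1 (operator norm). Then T is unitarily similar to S, i.e., there exists a unitary matrix U ∈ Mₙ(ℂ) with T = U S U*. -/
/-!
Let `f` be `T` acting on `ℂⁿ`: a contraction with `f ^ n = 0`. By compactness of the unit sphere
there is a unit vector `x` with `‖f ^ (n - 1) x‖ = 1`, and then every `f ^ k x` (`k < n`) is a unit
vector. A contraction that preserves the norm of `a` satisfies `f† f a = a`, hence preserves inner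
products with `a`. For `i < j < n`, the contraction `f ^ (n - j)` preserves the norm of `f ^ i x` and
kills `f ^ j x`, so `⟪f ^ i x, f ^ j x⟫ = 0`. Thus `f ^ (n - 1) x, …, f x, x` is an orthonormal
basis, and in it `f` acts as the Jordan block `S`.
-/

open scoped Matrix Matrix.Norms.L2Operator

noncomputable section

/-- The `n × n` nilpotent Jordan block `S`: ones on the superdiagonal, zeros elsewhere. -/
def jordanS (n : ℕ) : Matrix (Fin n) (Fin n) ℂ :=
  Matrix.of fun i j => if (i : ℕ) + 1 = (j : ℕ) then 1 else 0

open scoped InnerProductSpace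

namespace ContinuousLinearMap

theorem norm_pow_le_one_of_norm_le_one {𝕜 E : Type*} [NontriviallyNormedField 𝕜]
    [SeminormedAddCommGroup E] [NormedSpace 𝕜 E] {f : E →L[𝕜] E} (hf : ‖f‖ ≤ 1) :
    ∀ k : ℕ, ‖f ^ k‖ ≤ 1
  | 0 => norm_id_le
  | k + 1 => (norm_pow_le' f k.succ_pos).trans (pow_le_one₀ (norm_nonneg f) hf)

theorem apply_pow_apply {R M : Type*} [Semiring R] [TopologicalSpace M] [AddCommMonoid M]
    [Module R M] (f : M →L[R] M) (k : ℕ) (x : M) :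
    f ((f ^ k) x) = (f ^ (k + 1)) x := by
  rw [pow_succ']
  rfl

theorem pow_apply_pow_apply {R M : Type*} [Semiring R] [TopologicalSpace M] [AddCommMonoid M]
    [Module R M] (f : M →L[R] M) (j k : ℕ) (x : M) :
    (f ^ j) ((f ^ k) x) = (f ^ (j + k)) x := by
  rw [pow_add]
  rfl

section Contraction

variable {𝕜 E F : Type*} [RCLike 𝕜]
  [NormedAddCommGroup E] [InnerProductSpace 𝕜 E] [CompleteSpace E]
  [NormedAddCommGroup F] [InnerProductSpace 𝕜 F] [CompleteSpace F]
  {f : E →L[𝕜] F} {a : E}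

/-- `‖f† f a‖ ≤ ‖a‖` while `re ⟪f† f a, a⟫ = ‖f a‖² = ‖a‖²`, so `‖f† f a - a‖² ≤ 0`. -/
theorem adjoint_apply_apply_eq_self_of_norm_apply_eq (hf : ‖f‖ ≤ 1) (ha : ‖f a‖ = ‖a‖) :
    adjoint f (f a) = a := by
  have hle : ‖adjoint f (f a)‖ ≤ ‖a‖ := by
    calc ‖adjoint f (f a)‖ ≤ ‖adjoint f‖ * ‖f a‖ := (adjoint f).le_opNorm _
      _ ≤ 1 * ‖a‖ := by
        rw [LinearIsometryEquiv.norm_map, ha]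
        gcongr
      _ = ‖a‖ := one_mul _
  have hre : RCLike.re ⟪adjoint f (f a), a⟫_𝕜 = ‖a‖ ^ 2 := by
    rw [adjoint_inner_left, inner_self_eq_norm_sq, ha]
  rw [← sub_eq_zero, ← norm_eq_zero, ← sq_eq_zero_iff (a := ‖_‖)]
  refine le_antisymm ?_ (sq_nonneg _)
  rw [norm_sub_sq (𝕜 := 𝕜), hre]
  nlinarith [norm_nonneg (adjoint f (f a))]

theorem inner_map_map_of_norm_map_eq (hf : ‖f‖ ≤ 1) (ha : ‖f a‖ = ‖a‖) (b : E) :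
    ⟪f a, f b⟫_𝕜 = ⟪a, b⟫_𝕜 := by
  rw [← adjoint_inner_left, adjoint_apply_apply_eq_self_of_norm_apply_eq hf ha]

theorem inner_eq_zero_of_norm_map_eq_of_map_eq_zero (hf : ‖f‖ ≤ 1) (ha : ‖f a‖ = ‖a‖) {b : E}
    (hb : f b = 0) : ⟪a, b⟫_𝕜 = 0 := by
  rw [← inner_map_map_of_norm_map_eq hf ha, hb, inner_zero_right]

end Contraction

theorem exists_norm_eq_one_norm_apply_eq_opNorm {𝕜 E F : Type*} [RCLike 𝕜]
    [NormedAddCommGroup E] [NormedSpace 𝕜 E] [ProperSpace E] [Nontrivial E]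
    [SeminormedAddCommGroup F] [NormedSpace 𝕜 F] (f : E →L[𝕜] F) :
    ∃ x, ‖x‖ = 1 ∧ ‖f x‖ = ‖f‖ := by
  have hne : (Metric.sphere (0 : E) 1).Nonempty :=
    Set.nonempty_coe_sort.mp (NormedSpace.sphere_nonempty_rclike 𝕜 zero_le_one)
  obtain ⟨x, hx, hfx⟩ := ((isCompact_sphere (0 : E) 1).image_of_continuousOn
    (continuous_norm.comp f.continuous).continuousOn).sSup_mem (hne.image _)
  exact ⟨x, mem_sphere_zero_iff_norm.mp hx, hfx.trans f.sSup_sphere_eq_norm⟩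

section Orbit

variable {𝕜 E : Type*} [RCLike 𝕜] [NormedAddCommGroup E] [InnerProductSpace 𝕜 E] [CompleteSpace E]
  {f : E →L[𝕜] E}

theorem orthonormal_pow_apply {m : ℕ} (hf : ‖f‖ ≤ 1) (hnil : f ^ (m + 1) = 0) {x : E}
    (hx : ‖x‖ = 1) (hfx : ‖(f ^ m) x‖ = 1) :
    Orthonormal 𝕜 fun k : Fin (m + 1) => (f ^ (k : ℕ)) x := by
  have hnorm (k : ℕ) (hk : k ≤ m) : ‖(f ^ k) x‖ = 1 := by
    refine le_antisymm ?_ ?_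
    · simpa [hx] using (f ^ k).le_of_opNorm_le (norm_pow_le_one_of_norm_le_one hf k) x
    · calc (1 : ℝ) = ‖(f ^ (m - k)) ((f ^ k) x)‖ := by
            rw [pow_apply_pow_apply, Nat.sub_add_cancel hk, hfx]
        _ ≤ ‖(f ^ k) x‖ := by
            simpa using (f ^ (m - k)).le_of_opNorm_le (norm_pow_le_one_of_norm_le_one hf _) _
  have horth (i j : Fin (m + 1)) (hij : i < j) : ⟪(f ^ (i : ℕ)) x, (f ^ (j : ℕ)) x⟫_𝕜 = 0 := by
    have hj := j.isLt
    have hij' : (i : ℕ) < j := hij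
    refine inner_eq_zero_of_norm_map_eq_of_map_eq_zero (f := f ^ (m + 1 - j))
      (norm_pow_le_one_of_norm_le_one hf _) ?_ ?_
    · rw [pow_apply_pow_apply, hnorm _ (by omega), hnorm _ (by omega)]
    · rw [pow_apply_pow_apply, Nat.sub_add_cancel hj.le, hnil, zero_apply]
  refine ⟨fun k => hnorm k (Nat.lt_succ_iff.mp k.isLt), fun i j hij => ?_⟩
  rcases lt_or_gt_of_ne hij with h | h
  · exact horth i j h
  · rw [inner_eq_zero_symm]
    exact horth j i h

end Orbit

end ContinuousLinearMap

namespace Matrix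

theorem pow_card_eq_zero_of_isNilpotent {R ι : Type*} [CommRing R] [IsDomain R] [Fintype ι]
    [DecidableEq ι] {M : Matrix ι ι R} (hM : IsNilpotent M) : M ^ Fintype.card ι = 0 := by
  have hchar : M.charpoly = Polynomial.X ^ Fintype.card ι :=
    sub_eq_zero.mp (isNilpotent_charpoly_sub_pow_of_isNilpotent hM).eq_zero
  simpa [hchar] using M.aeval_self_charpoly

theorem conjTranspose_mul_self_of_orthonormal {𝕜 ι ι' : Type*} [RCLike 𝕜] [Fintype ι']
    [DecidableEq ι] {v : ι → EuclideanSpace 𝕜 ι'} (hv : Orthonormal 𝕜 v) :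
    (of fun i k => v k i)ᴴ * of (fun i k => v k i) = 1 := by
  ext k l
  rw [mul_apply, one_apply, ← orthonormal_iff_ite.mp hv k l, PiLp.inner_apply]
  simp [mul_comm]

variable {ι : Type*} {m : ℕ}

theorem mul_jordanS_apply_zero [Fintype ι] (A : Matrix ι (Fin (m + 1)) ℂ) (i : ι) :
    (A * jordanS (m + 1)) i 0 = 0 := by
  simp [mul_apply, jordanS]

theorem mul_jordanS_apply_succ (A : Matrix ι (Fin (m + 1)) ℂ) (i : ι) (k : Fin m) :
    (A * jordanS (m + 1)) i k.succ = A i k.castSucc := by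
  have hk (j : Fin (m + 1)) : (j : ℕ) = k ↔ j = k.castSucc := by simp [Fin.ext_iff]
  simp [mul_apply, jordanS, hk]

def revOrbitMatrix [Fintype ι] [DecidableEq ι] (T : Matrix ι ι ℂ) (m : ℕ)
    (x : EuclideanSpace ℂ ι) : Matrix ι (Fin (m + 1)) ℂ :=
  of fun i k => (toEuclideanCLM (𝕜 := ℂ) T ^ (k.rev : ℕ)) x i

theorem mul_revOrbitMatrix [Fintype ι] [DecidableEq ι] (T : Matrix ι ι ℂ)
    {x : EuclideanSpace ℂ ι} (hx : (toEuclideanCLM (𝕜 := ℂ) T ^ (m + 1)) x = 0) :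
    T * revOrbitMatrix T m x = revOrbitMatrix T m x * jordanS (m + 1) := by
  set f := toEuclideanCLM (𝕜 := ℂ) T
  ext i k
  induction k using Fin.cases with
  | zero =>
    rw [mul_jordanS_apply_zero]
    change f ((f ^ ((0 : Fin (m + 1)).rev : ℕ)) x) i = 0
    rw [ContinuousLinearMap.apply_pow_apply, Fin.val_rev_zero, Nat.pred_eq_sub_one,
      Nat.add_sub_cancel, hx]
    rfl
  | succ k =>
    rw [mul_jordanS_apply_succ]
    change f ((f ^ (k.succ.rev : ℕ)) x) i = (f ^ (k.castSucc.rev : ℕ)) x i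
    have hrev : (k.succ.rev : ℕ) + 1 = k.castSucc.rev := by
      simp only [Fin.val_rev, Fin.val_succ, Fin.val_castSucc]
      omega
    rw [ContinuousLinearMap.apply_pow_apply, hrev]

end Matrix

theorem stmt0_general (n : ℕ) (T : Matrix (Fin n) (Fin n) ℂ)
    (hnil : IsNilpotent T) (hT : ‖T‖ = 1) (hT' : ‖T ^ (n - 1)‖ = 1) :
    ∃ U : Matrix (Fin n) (Fin n) ℂ, Uᴴ * U = 1 ∧ T = U * jordanS n * Uᴴ := by
  cases n with
  | zero => exact ⟨1, Subsingleton.elim _ _, Subsingleton.elim _ _⟩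
  | succ m =>
  set f := Matrix.toEuclideanCLM (𝕜 := ℂ) T
  have hf : ‖f‖ ≤ 1 := ((Matrix.l2_opNorm_toEuclideanCLM T).trans hT).le
  have hfm : ‖f ^ m‖ = 1 := by
    rw [← map_pow, Matrix.l2_opNorm_toEuclideanCLM]
    simpa using hT'
  have hf_nil : f ^ (m + 1) = 0 := by
    have hT_nil : T ^ (m + 1) = 0 := by simpa using Matrix.pow_card_eq_zero_of_isNilpotent hnil
    rw [← map_pow, hT_nil, map_zero]
  obtain ⟨x, hx, hfx⟩ := (f ^ m).exists_norm_eq_one_norm_apply_eq_opNorm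
  have hU : (T.revOrbitMatrix m x)ᴴ * T.revOrbitMatrix m x = 1 :=
    Matrix.conjTranspose_mul_self_of_orthonormal <|
      (ContinuousLinearMap.orthonormal_pow_apply hf hf_nil hx (hfx.trans hfm)).comp Fin.rev
        Fin.rev_injective
  refine ⟨T.revOrbitMatrix m x, hU, ?_⟩
  rw [← Matrix.mul_revOrbitMatrix T (by rw [hf_nil]; rfl), mul_assoc, mul_eq_one_comm.mp hU,
    mul_one]

theorem stmt0 (n : ℕ) (hn : 0 < n) (T : Matrix (Fin n) (Fin n) ℂ)
    (hnil : IsNilpotent T) (hT : ‖T‖ = 1) (hT' : ‖T ^ (n - 1)‖ = 1) :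
    ∃ U : Matrix (Fin n) (Fin n) ℂ, Uᴴ * U = 1 ∧ T = U * jordanS n * Uᴴ :=
  stmt0_general n T hnil hT hT'
end
end

section
/- Let φ : 𝒜 → 𝒜 be a continuous multiplicative map (φ(XY) = φ(X)φ(Y) for all X, Y ∈ 𝒜) such that φ(S) = S and φ(αI) = αI for every complex number α. Then φ is the identity map on 𝒜. -/
open scoped Matrix Matrix.Norms.L2Operator

noncomputable section

/-- The algebra `𝒜` of upper-triangular `n × n` Toeplitz matrices. -/
def toeplitzUpper (n : ℕ) : Set (Matrix (Fin n) (Fin n) ℂ) :=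
  {A | (∀ i j : Fin n, (j : ℕ) < (i : ℕ) → A i j = 0) ∧
    ∀ i j i' j' : Fin n, (j : ℤ) - (i : ℤ) = (j' : ℤ) - (i' : ℤ) → A i j = A i' j'}

/-!
On `𝒜 ≅ ℂ[S]/(Sⁿ)`, `exp` identifies the ideal `S𝒜` with the unipotent group `1 + S𝒜`, so
`log ∘ φ ∘ exp` is additive on `S𝒜`. Comparing `Sⁿ⁻¹ A` with `Sⁿ⁻¹ φ(A)` shows that `φ` preserves
the diagonal, hence maps `1 + S𝒜` to itself. Continuity of `φ` at `S`, applied along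
`t⁻¹ + S = t⁻¹ (1 + tS)` with `t = m e` and `m → ∞`, forces `log ∘ φ ∘ exp` to fix every term
`(-1)ᵏ (e S)ᵏ⁺¹ / (k + 1)` of the series of `log (1 + e S)`, one superdiagonal at a time: at each
stage the discrepancy is a polynomial in `m` that tends to `0`. As `e` varies, these terms run
through all multiples of the powers `Sᵏ⁺¹`, so `log ∘ φ ∘ exp` is the identity; thus `φ` fixes
the invertible elements of `𝒜`, which are dense.
-/

open Filter Topology

lemma eq_zero_of_tendsto_sum_mul_natCast_pow {𝕜 : Type*} [RCLike 𝕜] {d : ℕ} {c : ℕ → 𝕜}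
    (h : Tendsto (fun m : ℕ => ∑ k ∈ Finset.range d, c k * (m : 𝕜) ^ k) atTop (𝓝 0)) :
    ∀ k < d, c k = 0 := by
  set p : Polynomial 𝕜 := ∑ k ∈ Finset.range d, Polynomial.C (c k) * Polynomial.X ^ k
  have heval : ∀ m : ℕ, p.eval (m : 𝕜) = ∑ k ∈ Finset.range d, c k * (m : 𝕜) ^ k := by
    simp [p, Polynomial.eval_finsetSum]
  simp_rw [← heval] at h
  have hp : p = 0 := by
    rcases le_or_gt p.degree 0 with hdeg | hdeg
    · rw [Polynomial.eq_C_of_degree_le_zero hdeg] at h ⊢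
      simpa using h
    · have hz : Tendsto (fun m : ℕ => ‖(m : 𝕜)‖) atTop atTop := by
        simp only [RCLike.norm_natCast]
        exact tendsto_natCast_atTop_atTop
      exact absurd h.norm (not_tendsto_nhds_of_tendsto_atTop (p.tendsto_norm_atTop hdeg hz) _)
  intro k hk
  simpa [p, Polynomial.finsetSum_coeff, Polynomial.coeff_C_mul_X_pow, hk] using
    congrArg (Polynomial.coeff · k) hp

lemma hasDerivAt_exp_of_commute {𝕂 𝔸 : Type*} [RCLike 𝕂] [NormedRing 𝔸] [NormedAlgebra 𝕂 𝔸]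
    [CompleteSpace 𝔸] {f : 𝕂 → 𝔸} {f' : 𝔸} {t : 𝕂} (hf : HasDerivAt f f' t)
    (hcomm : ∀ s, Commute (f t) (f s)) :
    HasDerivAt (fun s => NormedSpace.exp (f s)) (NormedSpace.exp (f t) * f') t := by
  have hsplit : (fun s => NormedSpace.exp (f s))
      = fun s => NormedSpace.exp (f t) * NormedSpace.exp (f s - f t) := by
    funext s
    rw [← NormedSpace.exp_add_of_commute_of_mem_ball (𝕂 := 𝕂)
      ((hcomm s).sub_right (Commute.refl _)) (by simp [NormedSpace.expSeries_radius_eq_top])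
      (by simp [NormedSpace.expSeries_radius_eq_top]), add_sub_cancel]
  have hdiff : HasDerivAt (fun s => f s - f t) f' t := hf.sub_const (f t)
  have h0 := hasFDerivAt_exp_zero (𝕂 := 𝕂) (𝔸 := 𝔸)
  rw [← sub_self (f t)] at h0
  rw [hsplit]
  simpa using (h0.comp_hasDerivAt t hdiff).const_mul (NormedSpace.exp (f t))

namespace ToeplitzUpper

variable {n : ℕ}

local notation "𝕄" => Matrix (Fin n) (Fin n) ℂ

lemma jordanS_pow_apply (k : ℕ) (i j : Fin n) :
    (jordanS n ^ k) i j = if (i : ℕ) + k = j then 1 else 0 := by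
  induction k generalizing j with
  | zero => simp [Matrix.one_apply, Fin.ext_iff]
  | succ k ih =>
    rw [pow_succ, Matrix.mul_apply]
    simp_rw [ih, jordanS, Matrix.of_apply, ite_mul, one_mul, zero_mul]
    by_cases h : (i : ℕ) + k < n
    · rw [Finset.sum_eq_single ⟨(i : ℕ) + k, h⟩ (by grind) (by simp)]
      simp only [if_true, add_assoc]
    · rw [Finset.sum_eq_zero (by grind), if_neg (by omega)]

lemma jordanS_pow_eq_zero {k : ℕ} (h : n ≤ k) : jordanS n ^ k = 0 := by
  ext i j
  rw [jordanS_pow_apply, if_neg (by omega), Matrix.zero_apply]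

def toeplitzSubmodule (n : ℕ) : Submodule ℂ (Matrix (Fin n) (Fin n) ℂ) where
  carrier := toeplitzUpper n
  add_mem' hA hB :=
    ⟨fun i j h => by simp [hA.1 i j h, hB.1 i j h],
      fun i j i' j' h => by simp [hA.2 i j i' j' h, hB.2 i j i' j' h]⟩
  zero_mem' := ⟨fun _ _ _ => rfl, fun _ _ _ _ _ => rfl⟩
  smul_mem' c _ hA :=
    ⟨fun i j h => by simp [hA.1 i j h], fun i j i' j' h => by simp [hA.2 i j i' j' h]⟩

lemma jordanS_pow_mem_toeplitzSubmodule (k : ℕ) : jordanS n ^ k ∈ toeplitzSubmodule n := by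
  refine ⟨fun i j h => ?_, fun i j i' j' h => ?_⟩ <;> simp only [jordanS_pow_apply]
  · rw [if_neg (by omega)]
  · congr 1
    grind

/-- The entry of `A` on the `k`-th superdiagonal (junk value `0` when `n ≤ k`). -/
def coeff (k : ℕ) : 𝕄 →ₗ[ℂ] ℂ where
  toFun A := if h : k < n then A ⟨0, by omega⟩ ⟨k, h⟩ else 0
  map_add' A B := by split_ifs <;> simp
  map_smul' c A := by split_ifs <;> simp

lemma coeff_jordanS_pow {j : ℕ} (hj : j < n) (k : ℕ) :
    coeff j (jordanS n ^ k) = if k = j then 1 else 0 := by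
  simp [coeff, hj, jordanS_pow_apply]

lemma coeff_zero_one (hn : 0 < n) : coeff 0 (1 : 𝕄) = 1 := by
  simpa using coeff_jordanS_pow hn 0

lemma coeff_one_of_ne_zero {j : ℕ} (hj : j ≠ 0) : coeff j (1 : 𝕄) = 0 := by
  simp [coeff, Fin.ext_iff, Ne.symm hj]

lemma eq_sum_coeff_smul {A : 𝕄} (hA : A ∈ toeplitzSubmodule n) :
    A = ∑ k ∈ Finset.range n, coeff k A • jordanS n ^ k := by
  ext i j
  simp only [Matrix.sum_apply, Matrix.smul_apply, jordanS_pow_apply, smul_eq_mul, mul_ite,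
    mul_one, mul_zero]
  by_cases hij : (i : ℕ) ≤ j
  · rw [Finset.sum_eq_single ((j : ℕ) - i) (fun _ _ _ => if_neg (by omega)) (by simp; omega),
      if_pos (by omega), coeff, LinearMap.coe_mk, AddHom.coe_mk, dif_pos (by omega)]
    exact hA.2 i j _ _ (by push_cast; omega)
  · rw [hA.1 i j (by omega), Finset.sum_eq_zero fun _ _ => if_neg (by omega)]

lemma mul_eq_sum_coeff_mul_smul {A B : 𝕄} (hA : A ∈ toeplitzSubmodule n)
    (hB : B ∈ toeplitzSubmodule n) :
    A * B = ∑ k ∈ Finset.range n, ∑ l ∈ Finset.range n,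
      (coeff k A * coeff l B) • jordanS n ^ (k + l) := by
  conv_lhs => rw [eq_sum_coeff_smul hA, eq_sum_coeff_smul hB]
  simp_rw [Finset.sum_mul_sum, smul_mul_smul_comm, pow_add]

def toeplitzSubalgebra (n : ℕ) : Subalgebra ℂ (Matrix (Fin n) (Fin n) ℂ) :=
  (toeplitzSubmodule n).toSubalgebra (by simpa using jordanS_pow_mem_toeplitzSubmodule 0)
    fun A B hA hB => by
      rw [mul_eq_sum_coeff_mul_smul hA hB]
      exact Submodule.sum_mem _ fun k _ => Submodule.sum_mem _ fun l _ =>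
        Submodule.smul_mem _ _ (jordanS_pow_mem_toeplitzSubmodule _)

local notation "𝒜" => toeplitzSubalgebra n

lemma jordanS_pow_mem (k : ℕ) : jordanS n ^ k ∈ 𝒜 := jordanS_pow_mem_toeplitzSubmodule k

lemma jordanS_mem : jordanS n ∈ 𝒜 := by simpa using jordanS_pow_mem (n := n) 1

lemma commute_of_mem {A B : 𝕄} (hA : A ∈ 𝒜) (hB : B ∈ 𝒜) : Commute A B := by
  rw [Commute, SemiconjBy, mul_eq_sum_coeff_mul_smul hA hB, mul_eq_sum_coeff_mul_smul hB hA,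
    Finset.sum_comm]
  simp_rw [mul_comm (coeff _ A), add_comm]

lemma sub_coeff_zero_smul_one {B : 𝕄} (hB : B ∈ 𝒜) :
    B - coeff 0 B • 1 = jordanS n * ∑ k ∈ Finset.range n, coeff (k + 1) B • jordanS n ^ k := by
  rcases Nat.eq_zero_or_pos n with rfl | hn
  · exact Subsingleton.elim _ _
  obtain ⟨m, rfl⟩ : ∃ m, n = m + 1 := ⟨n - 1, by omega⟩
  have hrepr := eq_sum_coeff_smul hB
  rw [Finset.sum_range_succ', pow_zero] at hrepr
  nth_rw 1 [hrepr]
  simp_rw [Finset.mul_sum, mul_smul_comm, ← pow_succ']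
  rw [Finset.sum_range_succ _ m, jordanS_pow_eq_zero le_rfl, smul_zero, add_zero,
    add_sub_cancel_right]

/-- The ideal `Sʲ 𝒜`: the elements of `𝒜` whose first `j` superdiagonals vanish. -/
def filtration (n j : ℕ) : Submodule ℂ (Matrix (Fin n) (Fin n) ℂ) :=
  (toeplitzSubalgebra n).toSubmodule.map (LinearMap.mulLeft ℂ (jordanS n ^ j))

local notation "𝒥" => filtration n

lemma mem_filtration {j : ℕ} {X : 𝕄} : X ∈ 𝒥 j ↔ ∃ B ∈ 𝒜, jordanS n ^ j * B = X := by
  simp [filtration]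

lemma mem_of_mem_filtration {j : ℕ} {X : 𝕄} (hX : X ∈ 𝒥 j) : X ∈ 𝒜 := by
  obtain ⟨B, hB, rfl⟩ := mem_filtration.1 hX
  exact mul_mem (jordanS_pow_mem j) hB

lemma mem_filtration_zero {X : 𝕄} (hX : X ∈ 𝒜) : X ∈ 𝒥 0 :=
  mem_filtration.2 ⟨X, hX, by rw [pow_zero, one_mul]⟩

lemma jordanS_pow_mem_filtration (k : ℕ) : jordanS n ^ k ∈ 𝒥 k :=
  mem_filtration.2 ⟨1, one_mem _, mul_one _⟩

lemma mul_mem_filtration {a b : ℕ} {X Y : 𝕄} (hX : X ∈ 𝒥 a) (hY : Y ∈ 𝒥 b) :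
    X * Y ∈ 𝒥 (a + b) := by
  obtain ⟨B, hB, rfl⟩ := mem_filtration.1 hX
  obtain ⟨C, hC, rfl⟩ := mem_filtration.1 hY
  refine mem_filtration.2 ⟨B * C, mul_mem hB hC, ?_⟩
  rw [pow_add, mul_assoc, mul_assoc, ← mul_assoc B, (commute_of_mem hB (jordanS_pow_mem b)).eq,
    mul_assoc]

lemma filtration_antitone : Antitone (𝒥) := fun i j hij X hX => by
  obtain ⟨B, hB, rfl⟩ := mem_filtration.1 hX
  refine mem_filtration.2 ⟨jordanS n ^ (j - i) * B, mul_mem (jordanS_pow_mem _) hB, ?_⟩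
  rw [← mul_assoc, ← pow_add, Nat.add_sub_cancel' hij]

lemma pow_mem_filtration {a : ℕ} {X : 𝕄} (hX : X ∈ 𝒥 a) (m : ℕ) : X ^ m ∈ 𝒥 (a * m) := by
  induction m with
  | zero => simpa using jordanS_pow_mem_filtration (n := n) 0
  | succ m ih => simpa [pow_succ, mul_add] using mul_mem_filtration ih hX

lemma eq_zero_of_mem_filtration {j : ℕ} {X : 𝕄} (hj : n ≤ j) (hX : X ∈ 𝒥 j) : X = 0 := by
  obtain ⟨B, -, rfl⟩ := mem_filtration.1 hX
  rw [jordanS_pow_eq_zero hj, zero_mul]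

lemma coeff_eq_zero_of_mem_filtration {j k : ℕ} {X : 𝕄} (hX : X ∈ 𝒥 j) (hk : k < j) :
    coeff k X = 0 := by
  obtain ⟨B, hB, rfl⟩ := mem_filtration.1 hX
  simp only [coeff, LinearMap.coe_mk, AddHom.coe_mk]
  split_ifs with hkn
  · rw [Matrix.mul_apply]
    refine Finset.sum_eq_zero fun l _ => ?_
    rw [jordanS_pow_apply]
    split_ifs with hl
    · exact (one_mul _).trans (hB.1 _ _ (by simp; omega))
    · exact zero_mul _
  · rfl

lemma coeff_jordanS_pow_mul {j : ℕ} {B : 𝕄} (hB : B ∈ 𝒜) (hj : j < n) :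
    coeff j (jordanS n ^ j * B) = coeff 0 B := by
  simp only [coeff, LinearMap.coe_mk, AddHom.coe_mk, dif_pos hj, dif_pos (show 0 < n by omega),
    Matrix.mul_apply, jordanS_pow_apply, zero_add, ite_mul, one_mul, zero_mul]
  rw [Finset.sum_eq_single ⟨j, hj⟩ (fun l _ hl => if_neg fun h => hl (Fin.ext h.symm))
    (by simp), if_pos rfl]
  exact hB.2 _ _ _ _ (by push_cast; omega)

lemma sub_coeff_smul_mem_filtration {j : ℕ} {X : 𝕄} (hX : X ∈ 𝒥 j) :
    X - coeff j X • jordanS n ^ j ∈ 𝒥 (j + 1) := by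
  rcases lt_or_ge j n with hj | hj
  · obtain ⟨B, hB, rfl⟩ := mem_filtration.1 hX
    refine mem_filtration.2 ⟨∑ k ∈ Finset.range n, coeff (k + 1) B • jordanS n ^ k,
      sum_mem fun k _ => Subalgebra.smul_mem _ (jordanS_pow_mem k) _, ?_⟩
    rw [coeff_jordanS_pow_mul hB hj, pow_succ, mul_assoc, ← sub_coeff_zero_smul_one hB, mul_sub,
      mul_smul_comm, mul_one]
  · rw [eq_zero_of_mem_filtration hj hX, map_zero, zero_smul, sub_zero]
    exact zero_mem _

lemma mem_filtration_of_coeff_eq_zero {j : ℕ} {X : 𝕄} (hX : X ∈ 𝒜)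
    (h : ∀ k < j, coeff k X = 0) : X ∈ 𝒥 j := by
  induction j with
  | zero => exact mem_filtration_zero hX
  | succ j ih =>
    simpa [h j j.lt_succ_self] using
      sub_coeff_smul_mem_filtration (ih fun k hk => h k (by omega))

lemma mem_filtration_one {X : 𝕄} (hX : X ∈ 𝒜) (h : coeff 0 X = 0) : X ∈ 𝒥 1 :=
  mem_filtration_of_coeff_eq_zero hX fun k hk => by rwa [Nat.lt_one_iff.1 hk]

lemma mul_mem_filtration_of_mem {k : ℕ} {A X : 𝕄} (hA : A ∈ 𝒜) (hX : X ∈ 𝒥 k) :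
    A * X ∈ 𝒥 k := by
  simpa using mul_mem_filtration (mem_filtration_zero hA) hX

open NormedSpace

lemma exp_eq_sum {N : ℕ} (hN : n ≤ N) {X : 𝕄} (hX : X ∈ 𝒥 1) :
    exp X = ∑ m ∈ Finset.range N, (Nat.factorial m : ℂ)⁻¹ • X ^ m := by
  rw [exp_eq_tsum ℂ]
  refine tsum_eq_sum fun m hm => ?_
  rw [eq_zero_of_mem_filtration (by simp at hm; omega) (pow_mem_filtration hX m), smul_zero]

lemma exp_sub_one_sub_mem_filtration {k : ℕ} (hk : 1 ≤ k) {X : 𝕄} (hX : X ∈ 𝒥 k) :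
    exp X - 1 - X ∈ 𝒥 (2 * k) := by
  rw [exp_eq_sum (Nat.le_add_right n 2) (filtration_antitone hk hX), Finset.sum_range_succ',
    Finset.sum_range_succ']
  simp only [zero_add, pow_zero, pow_one, Nat.factorial_zero, Nat.factorial_one, Nat.cast_one,
    inv_one, one_smul, add_sub_cancel_right]
  exact sum_mem fun m _ => Submodule.smul_mem _ _
    (filtration_antitone (by nlinarith) (pow_mem_filtration hX (m + 2)))

lemma exp_sub_one_mem_filtration {k : ℕ} (hk : 1 ≤ k) {X : 𝕄} (hX : X ∈ 𝒥 k) :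
    exp X - 1 ∈ 𝒥 k := by
  simpa using add_mem (filtration_antitone (by omega) (exp_sub_one_sub_mem_filtration hk hX)) hX

lemma exp_mem {X : 𝕄} (hX : X ∈ 𝒥 1) : exp X ∈ 𝒜 := by
  simpa using add_mem (mem_of_mem_filtration (exp_sub_one_mem_filtration le_rfl hX)) (one_mem 𝒜)

lemma coeff_zero_exp (hn : 0 < n) {X : 𝕄} (hX : X ∈ 𝒥 1) : coeff 0 (exp X) = 1 := by
  have h := coeff_eq_zero_of_mem_filtration (exp_sub_one_mem_filtration le_rfl hX) one_pos
  rwa [map_sub, coeff_zero_one hn, sub_eq_zero] at h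

lemma coeff_exp_of_mem_filtration {j : ℕ} (hj : 1 ≤ j) {X : 𝕄} (hX : X ∈ 𝒥 j) :
    coeff j (exp X) = coeff j X := by
  have h := coeff_eq_zero_of_mem_filtration (filtration_antitone (by omega)
    (exp_sub_one_sub_mem_filtration hj hX)) (Nat.lt_succ_self j)
  rwa [map_sub, map_sub, coeff_one_of_ne_zero (by omega), sub_zero, sub_eq_zero] at h

lemma exp_add_of_mem {X Y : 𝕄} (hX : X ∈ 𝒥 1) (hY : Y ∈ 𝒥 1) :
    exp (X + Y) = exp X * exp Y :=
  Matrix.exp_add_of_commute X Y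
    (commute_of_mem (mem_of_mem_filtration hX) (mem_of_mem_filtration hY))

lemma exp_sub_exp_sub_mem_filtration {k : ℕ} (hk : 1 ≤ k) {X Y : 𝕄} (hY : Y ∈ 𝒥 1)
    (hXY : X - Y ∈ 𝒥 k) :
    exp X - exp Y - (X - Y) ∈ 𝒥 (k + 1) := by
  have hexp : exp X = exp Y * exp (X - Y) := by
    rw [← exp_add_of_mem hY (filtration_antitone hk hXY), add_sub_cancel]
  have key : exp X - exp Y - (X - Y)
      = (exp Y - 1) * (X - Y) + exp Y * (exp (X - Y) - 1 - (X - Y)) := by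
    rw [hexp]; noncomm_ring
  rw [key, add_comm k]
  exact add_mem (mul_mem_filtration (exp_sub_one_mem_filtration le_rfl hY) hXY)
    (filtration_antitone (by omega)
      (mul_mem_filtration_of_mem (exp_mem hY) (exp_sub_one_sub_mem_filtration hk hXY)))

lemma exp_injOn_filtration_one {X Y : 𝕄} (hX : X ∈ 𝒥 1) (hY : Y ∈ 𝒥 1) (h : exp X = exp Y) :
    X = Y := by
  have key : ∀ k, 1 ≤ k → X - Y ∈ 𝒥 k := by
    intro k hk
    induction k, hk using Nat.le_induction with
    | base => exact sub_mem hX hY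
    | succ k hk ih =>
      have := exp_sub_exp_sub_mem_filtration hk hY ih
      rwa [h, sub_self, zero_sub, neg_mem_iff] at this
  rcases Nat.eq_zero_or_pos n with rfl | hn
  · exact Subsingleton.elim _ _
  exact sub_eq_zero.1 (eq_zero_of_mem_filtration le_rfl (key n hn))

lemma exists_exp_eq (hn : 0 < n) {U : 𝕄} (hU : U ∈ 𝒜) (hU0 : coeff 0 U = 1) :
    ∃ N ∈ 𝒥 1, exp N = U := by
  have approx : ∀ k, 1 ≤ k → ∃ N ∈ 𝒥 1, exp N - U ∈ 𝒥 k := by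
    intro k hk
    induction k, hk using Nat.le_induction with
    | base =>
      refine ⟨0, zero_mem _, mem_filtration_one (by simpa using sub_mem (one_mem _) hU) ?_⟩
      rw [exp_zero, map_sub, coeff_zero_one hn, hU0, sub_self]
    | succ k hk ih =>
      obtain ⟨N, hN, hNU⟩ := ih
      set c := coeff k (exp N - U)
      have hD : -c • jordanS n ^ k ∈ 𝒥 k :=
        Submodule.smul_mem _ _ (jordanS_pow_mem_filtration k)
      have hN' : N + -c • jordanS n ^ k ∈ 𝒥 1 := add_mem hN (filtration_antitone hk hD)
      refine ⟨_, hN', ?_⟩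
      have key : exp (N + -c • jordanS n ^ k) - U = (exp N - U - c • jordanS n ^ k)
          + (exp (N + -c • jordanS n ^ k) - exp N - (N + -c • jordanS n ^ k - N)) := by
        rw [neg_smul]; abel
      rw [key]
      exact add_mem (sub_coeff_smul_mem_filtration hNU)
        (exp_sub_exp_sub_mem_filtration hk hN (by simpa using hD))
  obtain ⟨N, hN, hNU⟩ := approx n hn
  exact ⟨N, hN, sub_eq_zero.1 (eq_zero_of_mem_filtration le_rfl hNU)⟩

/-- The coefficients of the Mercator series `log (1 + x) = ∑ (-1)ᵏ xᵏ⁺¹ / (k + 1)`. -/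
def logCoeff (k : ℕ) : ℂ := (-1) ^ k / (k + 1)

def logTerm (n : ℕ) (t : ℂ) (k : ℕ) : Matrix (Fin n) (Fin n) ℂ :=
  (logCoeff k * t ^ (k + 1)) • jordanS n ^ (k + 1)

def logOneAdd (n : ℕ) (t : ℂ) : Matrix (Fin n) (Fin n) ℂ :=
  ∑ k ∈ Finset.range n, logTerm n t k

lemma logTerm_mem_filtration_one (t : ℂ) (k : ℕ) : logTerm n t k ∈ 𝒥 1 :=
  Submodule.smul_mem _ _ (filtration_antitone (by omega) (jordanS_pow_mem_filtration (k + 1)))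

lemma logTerm_mul (s t : ℂ) (k : ℕ) : logTerm n (s * t) k = s ^ (k + 1) • logTerm n t k := by
  rw [logTerm, logTerm, smul_smul, mul_pow]
  ring_nf

lemma logOneAdd_mem_filtration_one (t : ℂ) : logOneAdd n t ∈ 𝒥 1 :=
  sum_mem fun k _ => logTerm_mem_filtration_one t k

lemma hasDerivAt_logOneAdd (t : ℂ) :
    HasDerivAt (logOneAdd n) (∑ k ∈ Finset.range n, (-t) ^ k • jordanS n ^ (k + 1)) t := by
  refine HasDerivAt.fun_sum fun k _ => ?_
  refine (((hasDerivAt_pow (k + 1) t).const_mul (logCoeff k)).smul_const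
    (jordanS n ^ (k + 1))).congr_deriv ?_
  rw [logCoeff, neg_pow t, Nat.add_sub_cancel]
  push_cast
  field_simp

lemma sum_neg_pow_smul_mul_one_add (t : ℂ) :
    (∑ k ∈ Finset.range n, (-t) ^ k • jordanS n ^ (k + 1)) * (1 + t • jordanS n) = jordanS n := by
  have htel : ∀ k, (-t) ^ k • jordanS n ^ (k + 1) * (1 + t • jordanS n)
      = (-t) ^ k • jordanS n ^ (k + 1) - (-t) ^ (k + 1) • jordanS n ^ (k + 1 + 1) := by
    intro k
    rw [mul_add, mul_one, smul_mul_smul_comm, ← pow_succ, pow_succ (-t), mul_neg, neg_smul,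
      sub_neg_eq_add]
  rw [Finset.sum_mul, Finset.sum_congr rfl fun k _ => htel k, Finset.sum_range_sub',
    jordanS_pow_eq_zero (k := n + 1) (by omega), smul_zero, sub_zero, pow_zero, one_smul,
    zero_add, pow_one]

lemma exp_logOneAdd (t : ℂ) : exp (logOneAdd n t) = 1 + t • jordanS n := by
  have hmem : ∀ s, logOneAdd n s ∈ 𝒜 :=
    fun s => mem_of_mem_filtration (logOneAdd_mem_filtration_one s)
  have hderiv : ∀ s, HasDerivAt (fun s => exp (-logOneAdd n s) * (1 + s • jordanS n)) 0 s := by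
    intro s
    have hexp : HasDerivAt (fun s => exp (-logOneAdd n s))
        (exp (-logOneAdd n s) * -∑ k ∈ Finset.range n, (-s) ^ k • jordanS n ^ (k + 1)) s :=
      hasDerivAt_exp_of_commute (hasDerivAt_logOneAdd s).neg
        fun r => ((commute_of_mem (hmem s) (hmem r)).neg_left).neg_right
    have hlin : HasDerivAt (fun s : ℂ => 1 + s • jordanS n) (jordanS n) s := by
      simpa using ((hasDerivAt_id s).smul_const (jordanS n)).const_add 1
    refine (hexp.mul hlin).congr_deriv ?_
    rw [mul_assoc, ← mul_add, neg_mul, sum_neg_pow_smul_mul_one_add, neg_add_cancel, mul_zero]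
  have hconst := is_const_of_deriv_eq_zero (fun s => (hderiv s).differentiableAt)
    (fun s => (hderiv s).deriv) t 0
  have hL0 : logOneAdd n 0 = 0 := by simp [logOneAdd, logTerm]
  rw [hL0, neg_zero, exp_zero, zero_smul, add_zero, mul_one] at hconst
  have hinv : exp (logOneAdd n t) * exp (-logOneAdd n t) = 1 := by
    rw [← Matrix.exp_add_of_commute _ _ (Commute.refl (logOneAdd n t)).neg_right, add_neg_cancel,
      exp_zero]
  calc exp (logOneAdd n t)
      = exp (logOneAdd n t) * (exp (-logOneAdd n t) * (1 + t • jordanS n)) := by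
        rw [hconst, mul_one]
    _ = 1 + t • jordanS n := by rw [← mul_assoc, hinv, one_mul]

lemma coeff_inv_smul_one_add_smul_mul_exp {j : ℕ} (hj : 1 ≤ j) {R : 𝕄} (hR : R ∈ 𝒥 j) {t : ℂ}
    (ht : t ≠ 0) :
    coeff j (t⁻¹ • ((1 + t • jordanS n) * exp R)) = t⁻¹ * coeff j R + coeff j (jordanS n) := by
  have hsplit : t⁻¹ • ((1 + t • jordanS n) * exp R)
      = t⁻¹ • exp R + jordanS n + jordanS n * (exp R - 1) := by
    rw [add_mul, one_mul, smul_add, smul_mul_assoc, smul_smul, inv_mul_cancel₀ ht, one_smul,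
      mul_sub, mul_one]
    abel
  have hSR : jordanS n * (exp R - 1) ∈ 𝒥 (1 + j) := by
    simpa using mul_mem_filtration (jordanS_pow_mem_filtration 1) (exp_sub_one_mem_filtration hj hR)
  rw [hsplit, map_add, map_add, map_smul, coeff_exp_of_mem_filtration hj hR,
    coeff_eq_zero_of_mem_filtration hSR (by omega), add_zero, smul_eq_mul]

lemma jordanS_pow_pred_mul {A : 𝕄} (hA : A ∈ 𝒜) :
    jordanS n ^ (n - 1) * A = coeff 0 A • jordanS n ^ (n - 1) := by
  rcases Nat.eq_zero_or_pos n with rfl | hn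
  · exact Subsingleton.elim _ _
  rw [← sub_eq_zero, ← mul_smul_one, ← mul_sub, sub_coeff_zero_smul_one hA, ← mul_assoc,
    ← pow_succ, Nat.sub_add_cancel hn, jordanS_pow_eq_zero le_rfl, zero_mul]

/-- `log ∘ φ ∘ exp` on `𝒥 1`; `Function.invFunOn exp` is the logarithm of `1 + 𝒥 1`. -/
def logMap (φ : Matrix (Fin n) (Fin n) ℂ → Matrix (Fin n) (Fin n) ℂ) (X : 𝕄) : 𝕄 :=
  Function.invFunOn exp (𝒥 1 : Set 𝕄) (φ (exp X))

structure IsToeplitzMulMap (φ : 𝕄 → 𝕄) : Prop where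
  mapsTo : ∀ A ∈ 𝒜, φ A ∈ 𝒜
  map_mul : ∀ A ∈ 𝒜, ∀ B ∈ 𝒜, φ (A * B) = φ A * φ B
  map_jordanS : φ (jordanS n) = jordanS n
  map_smul_one : ∀ α : ℂ, φ (α • 1) = α • 1

namespace IsToeplitzMulMap

variable {φ : Matrix (Fin n) (Fin n) ℂ → Matrix (Fin n) (Fin n) ℂ} (hφ : IsToeplitzMulMap φ)
include hφ

lemma map_smul {A : 𝕄} (hA : A ∈ 𝒜) (c : ℂ) : φ (c • A) = c • φ A := by
  rw [← smul_one_mul, hφ.map_mul _ (Subalgebra.smul_mem _ (one_mem _) c) _ hA, hφ.map_smul_one,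
    smul_one_mul]

lemma map_one : φ 1 = 1 := by simpa using hφ.map_smul_one 1

lemma map_jordanS_pow (k : ℕ) : φ (jordanS n ^ k) = jordanS n ^ k := by
  induction k with
  | zero => exact hφ.map_one
  | succ k ih => rw [pow_succ, hφ.map_mul _ (jordanS_pow_mem k) _ jordanS_mem, ih, hφ.map_jordanS]

lemma coeff_zero_map {A : 𝕄} (hA : A ∈ 𝒜) : coeff 0 (φ A) = coeff 0 A := by
  rcases Nat.eq_zero_or_pos n with rfl | hn
  · simp [coeff]
  have h := hφ.map_mul _ (jordanS_pow_mem (n - 1)) _ hA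
  rw [jordanS_pow_pred_mul hA, hφ.map_smul (jordanS_pow_mem _), hφ.map_jordanS_pow,
    jordanS_pow_pred_mul (hφ.mapsTo A hA)] at h
  have h' := congrArg (coeff (n - 1)) h
  simpa [coeff_jordanS_pow (Nat.sub_lt hn one_pos)] using h'.symm

lemma logMap_mem_and_exp_logMap (hn : 0 < n) {X : 𝕄} (hX : X ∈ 𝒥 1) :
    logMap φ X ∈ 𝒥 1 ∧ exp (logMap φ X) = φ (exp X) :=
  Function.invFunOn_pos <| exists_exp_eq hn (hφ.mapsTo _ (exp_mem hX))
    (by rw [hφ.coeff_zero_map (exp_mem hX), coeff_zero_exp hn hX])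

lemma logMap_add (hn : 0 < n) {X Y : 𝕄} (hX : X ∈ 𝒥 1) (hY : Y ∈ 𝒥 1) :
    logMap φ (X + Y) = logMap φ X + logMap φ Y := by
  obtain ⟨hX₁, hX₂⟩ := hφ.logMap_mem_and_exp_logMap hn hX
  obtain ⟨hY₁, hY₂⟩ := hφ.logMap_mem_and_exp_logMap hn hY
  obtain ⟨hXY₁, hXY₂⟩ := hφ.logMap_mem_and_exp_logMap hn (add_mem hX hY)
  refine exp_injOn_filtration_one hXY₁ (add_mem hX₁ hY₁) ?_
  rw [hXY₂, exp_add_of_mem hX hY, hφ.map_mul _ (exp_mem hX) _ (exp_mem hY), ← hX₂, ← hY₂,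
    exp_add_of_mem hX₁ hY₁]

lemma logMap_zero (hn : 0 < n) : logMap φ (0 : 𝕄) = 0 := by
  obtain ⟨h₁, h₂⟩ := hφ.logMap_mem_and_exp_logMap hn (zero_mem (𝒥 1))
  exact exp_injOn_filtration_one h₁ (zero_mem _) (by rw [h₂, exp_zero, hφ.map_one])

lemma logMap_sum (hn : 0 < n) {ι : Type*} (s : Finset ι) {X : ι → 𝕄} (hX : ∀ i ∈ s, X i ∈ 𝒥 1) :
    logMap φ (∑ i ∈ s, X i) = ∑ i ∈ s, logMap φ (X i) := by
  classical
  induction s using Finset.induction with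
  | empty => simpa using hφ.logMap_zero hn
  | insert a s ha ih =>
    rw [Finset.sum_insert ha, Finset.sum_insert ha,
      hφ.logMap_add hn (hX a (by simp)) (sum_mem fun i hi => hX i (by simp [hi])),
      ih fun i hi => hX i (by simp [hi])]

lemma logMap_natCast_smul (hn : 0 < n) (m : ℕ) {X : 𝕄} (hX : X ∈ 𝒥 1) :
    logMap φ ((m : ℂ) • X) = (m : ℂ) • logMap φ X := by
  have h := hφ.logMap_sum hn (Finset.range m) fun _ _ => hX
  simp only [Finset.sum_const, Finset.card_range] at h
  rwa [← Nat.cast_smul_eq_nsmul ℂ, ← Nat.cast_smul_eq_nsmul ℂ] at h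

lemma map_exp {X : 𝕄} (hn : 0 < n) (hX : X ∈ 𝒥 1) : φ (exp X) = exp (logMap φ X) :=
  (hφ.logMap_mem_and_exp_logMap hn hX).2.symm

lemma map_inv_smul_one_add_jordanS (hn : 0 < n) {t : ℂ} (ht : t ≠ 0) :
    φ (t⁻¹ • 1 + jordanS n) = t⁻¹ • exp (logMap φ (logOneAdd n t)) := by
  rw [← hφ.map_exp hn (logOneAdd_mem_filtration_one t), exp_logOneAdd,
    ← hφ.map_smul (add_mem (one_mem _) (Subalgebra.smul_mem _ jordanS_mem t)), smul_add, smul_smul,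
    inv_mul_cancel₀ ht, one_smul]

lemma logMap_logOneAdd_natCast_mul (hn : 0 < n) (m : ℕ) (e : ℂ) :
    logMap φ (logOneAdd n (m * e)) = logOneAdd n (m * e)
      + ∑ k ∈ Finset.range n, (m : ℂ) ^ (k + 1) • (logMap φ (logTerm n e k) - logTerm n e k) := by
  simp_rw [logOneAdd, logTerm_mul, ← Nat.cast_pow]
  rw [hφ.logMap_sum hn _ fun k _ => Submodule.smul_mem _ _ (logTerm_mem_filtration_one e k),
    ← Finset.sum_add_distrib]
  refine Finset.sum_congr rfl fun k _ => ?_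
  rw [hφ.logMap_natCast_smul hn _ (logTerm_mem_filtration_one e k), smul_sub, add_sub_cancel]

lemma tendsto_map_smul_one_add_jordanS (hcont : ContinuousOn φ 𝒜) {u : ℕ → ℂ}
    (hu : Tendsto u atTop (𝓝 0)) :
    Tendsto (fun m => φ (u m • 1 + jordanS n)) atTop (𝓝 (jordanS n)) := by
  have hmem : ∀ m, u m • 1 + jordanS n ∈ 𝒜 :=
    fun m => add_mem (Subalgebra.smul_mem _ (one_mem _) _) jordanS_mem
  have hlim : Tendsto (fun m => u m • (1 : 𝕄) + jordanS n) atTop (𝓝 (jordanS n)) := by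
    simpa using (hu.smul_const (1 : 𝕄)).add_const (jordanS n)
  have h := (hcont _ jordanS_mem).tendsto.comp
    (tendsto_nhdsWithin_iff.2 ⟨hlim, Eventually.of_forall hmem⟩)
  rwa [hφ.map_jordanS] at h

/-- With `aₖ` the differences in the statement, `φ` sends `t⁻¹ + S → S` (with `t = m e`) to
`t⁻¹ (1 + t S) exp (∑ mᵏ⁺¹ aₖ)`, whose `j`-th coefficient is `coeff j S` plus a polynomial in `m`
with coefficients `e⁻¹ coeff j aₖ`; continuity at `S` forces that polynomial to vanish. -/
lemma coeff_logMap_logTerm_sub_eq_zero (hcont : ContinuousOn φ 𝒜) (hn : 0 < n) {e : ℂ}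
    (he : e ≠ 0) {j : ℕ} (hj : 1 ≤ j)
    (ha : ∀ k < n, logMap φ (logTerm n e k) - logTerm n e k ∈ 𝒥 j) :
    ∀ k < n, coeff j (logMap φ (logTerm n e k) - logTerm n e k) = 0 := by
  set a := fun k => logMap φ (logTerm n e k) - logTerm n e k
  set c := fun k => e⁻¹ * coeff j (a k)
  have hcoeff : ∀ m : ℕ, 1 ≤ m → coeff j (φ (((m : ℂ) * e)⁻¹ • 1 + jordanS n))
      = ∑ k ∈ Finset.range n, c k * (m : ℂ) ^ k + coeff j (jordanS n) := by
    intro m hm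
    have hm0 : (m : ℂ) ≠ 0 := by exact_mod_cast (by omega : m ≠ 0)
    have hme : (m : ℂ) * e ≠ 0 := mul_ne_zero hm0 he
    have hR : ∑ k ∈ Finset.range n, (m : ℂ) ^ (k + 1) • a k ∈ 𝒥 j :=
      sum_mem fun k hk => Submodule.smul_mem _ _ (ha k (Finset.mem_range.1 hk))
    rw [hφ.map_inv_smul_one_add_jordanS hn hme, hφ.logMap_logOneAdd_natCast_mul hn,
      exp_add_of_mem (logOneAdd_mem_filtration_one _) (filtration_antitone hj hR), exp_logOneAdd,
      coeff_inv_smul_one_add_smul_mul_exp hj hR hme, map_sum, Finset.mul_sum]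
    congr 1
    refine Finset.sum_congr rfl fun k _ => ?_
    rw [LinearMap.map_smul, smul_eq_mul]
    simp only [c]
    field_simp
    ring
  have hlim : Tendsto (fun m : ℕ => ∑ k ∈ Finset.range n, c k * (m : ℂ) ^ k) atTop (𝓝 0) := by
    have hu : Tendsto (fun m : ℕ => ((m : ℂ) * e)⁻¹) atTop (𝓝 0) := by
      have h := (tendsto_inv_atTop_nhds_zero_nat (𝕜 := ℂ)).mul_const e⁻¹
      rw [zero_mul] at h
      exact h.congr fun m => (mul_inv _ _).symm
    have h := (((coeff j).continuous_of_finiteDimensional.tendsto _).comp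
      (hφ.tendsto_map_smul_one_add_jordanS hcont hu)).sub_const (coeff j (jordanS n))
    rw [sub_self] at h
    refine h.congr' ?_
    filter_upwards [eventually_ge_atTop 1] with m hm
    rw [Function.comp_apply, hcoeff m hm, add_sub_cancel_right]
  intro k hk
  exact (mul_eq_zero.1 (eq_zero_of_tendsto_sum_mul_natCast_pow hlim k hk)).resolve_left
    (inv_ne_zero he)

lemma logMap_logTerm (hcont : ContinuousOn φ 𝒜) (hn : 0 < n) {e : ℂ} (he : e ≠ 0) {k : ℕ}
    (hk : k < n) : logMap φ (logTerm n e k) = logTerm n e k := by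
  have key : ∀ j, 1 ≤ j → ∀ i < n, logMap φ (logTerm n e i) - logTerm n e i ∈ 𝒥 j := by
    intro j hj
    induction j, hj using Nat.le_induction with
    | base => exact fun i _ => sub_mem (hφ.logMap_mem_and_exp_logMap hn
        (logTerm_mem_filtration_one e i)).1 (logTerm_mem_filtration_one e i)
    | succ j hj ih =>
      intro i hi
      simpa [hφ.coeff_logMap_logTerm_sub_eq_zero hcont hn he hj ih i hi] using
        sub_coeff_smul_mem_filtration (ih i hi)
  exact sub_eq_zero.1 (eq_zero_of_mem_filtration le_rfl (key n hn k hk))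

lemma logMap_smul_jordanS_pow (hcont : ContinuousOn φ 𝒜) (hn : 0 < n) (z : ℂ) (k : ℕ) :
    logMap φ (z • jordanS n ^ (k + 1)) = z • jordanS n ^ (k + 1) := by
  rcases lt_or_ge k n with hk | hk
  swap
  · rw [jordanS_pow_eq_zero (by omega), smul_zero, hφ.logMap_zero hn]
  rcases eq_or_ne z 0 with rfl | hz
  · rw [zero_smul, hφ.logMap_zero hn]
  have hc : logCoeff k ≠ 0 := by simp [logCoeff]; exact_mod_cast k.succ_ne_zero
  obtain ⟨e, he⟩ := IsAlgClosed.exists_pow_nat_eq (z / logCoeff k) k.succ_pos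
  have hze : z • jordanS n ^ (k + 1) = logTerm n e k := by
    rw [logTerm, he, mul_div_cancel₀ _ hc]
  have he0 : e ≠ 0 := by
    rintro rfl
    exact div_ne_zero hz hc (by simpa using he.symm)
  rw [hze, hφ.logMap_logTerm hcont hn he0 hk]

lemma logMap_eq_self (hcont : ContinuousOn φ 𝒜) (hn : 0 < n) {X : 𝕄} (hX : X ∈ 𝒥 1) :
    logMap φ X = X := by
  have hrepr : X = ∑ k ∈ Finset.range n, coeff (k + 1) X • jordanS n ^ (k + 1) := by
    have h := sub_coeff_zero_smul_one (mem_of_mem_filtration hX)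
    rw [coeff_eq_zero_of_mem_filtration hX one_pos, zero_smul, sub_zero, Finset.mul_sum] at h
    simpa [mul_smul_comm, ← pow_succ'] using h
  rw [hrepr, hφ.logMap_sum hn _ fun k _ => Submodule.smul_mem _ _
    (filtration_antitone (by omega) (jordanS_pow_mem_filtration (k + 1)))]
  exact Finset.sum_congr rfl fun k _ => hφ.logMap_smul_jordanS_pow hcont hn _ k

lemma map_eq_self_of_coeff_zero_ne_zero (hcont : ContinuousOn φ 𝒜) (hn : 0 < n) {A : 𝕄}
    (hA : A ∈ 𝒜) (hA0 : coeff 0 A ≠ 0) : φ A = A := by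
  obtain ⟨N, hN, hexp⟩ := exists_exp_eq hn (Subalgebra.smul_mem _ hA (coeff 0 A)⁻¹)
    (by rw [LinearMap.map_smul, smul_eq_mul, inv_mul_cancel₀ hA0])
  have hAN : A = coeff 0 A • exp N := by rw [hexp, smul_smul, mul_inv_cancel₀ hA0, one_smul]
  rw [hAN, hφ.map_smul (exp_mem hN), hφ.map_exp hn hN, hφ.logMap_eq_self hcont hn hN]

end IsToeplitzMulMap

end ToeplitzUpper

open ToeplitzUpper in
theorem stmt2 (n : ℕ) (φ : Matrix (Fin n) (Fin n) ℂ → Matrix (Fin n) (Fin n) ℂ)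
    (hrange : ∀ A ∈ toeplitzUpper n, φ A ∈ toeplitzUpper n)
    (hcont : ContinuousOn φ (toeplitzUpper n))
    (hmul : ∀ X ∈ toeplitzUpper n, ∀ Y ∈ toeplitzUpper n, φ (X * Y) = φ X * φ Y)
    (hS : φ (jordanS n) = jordanS n)
    (hscalar : ∀ α : ℂ, φ (α • (1 : Matrix (Fin n) (Fin n) ℂ)) = α • (1 : Matrix (Fin n) (Fin n) ℂ)) :
    ∀ A ∈ toeplitzUpper n, φ A = A := by
  intro A hA
  rcases Nat.eq_zero_or_pos n with rfl | hn
  · exact Subsingleton.elim _ _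
  have hφ : IsToeplitzMulMap φ := ⟨hrange, hmul, hS, hscalar⟩
  rcases ne_or_eq (coeff 0 A) 0 with hA0 | hA0
  · exact hφ.map_eq_self_of_coeff_zero_ne_zero hcont hn hA hA0
  -- `A` is the limit of the invertible elements `A + ε • 1`, which `φ` fixes.
  set ε : ℕ → ℂ := fun m => 1 / ((m : ℂ) + 1)
  have hmem : ∀ m, A + ε m • 1 ∈ toeplitzSubalgebra n :=
    fun m => add_mem hA (Subalgebra.smul_mem _ (one_mem _) _)
  have hfix : ∀ m, φ (A + ε m • 1) = A + ε m • 1 := fun m =>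
    hφ.map_eq_self_of_coeff_zero_ne_zero hcont hn (hmem m) (by
      simp [ε, hA0, coeff_zero_one hn, Nat.cast_add_one_ne_zero])
  have hlim : Tendsto (fun m => A + ε m • 1) atTop (𝓝 A) := by
    simpa [ε] using ((tendsto_one_div_add_atTop_nhds_zero_nat (𝕜 := ℂ)).smul_const
      (1 : Matrix (Fin n) (Fin n) ℂ)).const_add A
  have hφlim := (hcont A hA).tendsto.comp
    (tendsto_nhdsWithin_iff.2 ⟨hlim, Eventually.of_forall hmem⟩)
  exact tendsto_nhds_unique hφlim (hlim.congr fun m => (hfix m).symm)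
end
end

section
/- Let n > 1 and let φ : 𝒜 → 𝒜 be a continuous, multiplicative, norm-preserving map (‖φ(A)‖ = ‖A‖ and φ(XY) = φ(X)φ(Y) for all A, X, Y ∈ 𝒜) such that φ(S) = S. Then φ is either homogeneous (φ(αA) = α φ(A) for all α ∈ ℂ and A ∈ 𝒜) or skew-homogeneous (φ(αA) = \overline{α} φ(A) for all α ∈ ℂ and A ∈ 𝒜, where \overline{α} is the complex conjugate). -/
open scoped Matrix Matrix.Norms.L2Operator

noncomputable section

/-!
Write `c α` for the `(0, 0)` entry of `φ (α • 1)` and `e γ` for the `(0, 1)` entry of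
`φ (1 + γ • S)`. Multiplying by `S ^ (n - 1)` and `S ^ (n - 2)` shows that `φ` preserves a
diagonal `1` and that the `(0, 1)` entry of `φ X` is `e` of that of `X`. Hence `c` is
multiplicative with `‖c α‖ ≤ ‖α‖`, so `‖c α‖ = ‖α‖`; the norm of the last column then forces
`φ (α • 1) = c α • 1`, i.e. `φ (α • A) = c α • φ A`. The map `e` is additive and continuous,
so `e z = a z + b z̄`. Continuity of `φ` at `β • S` gives `c α * e (β / α) → c β` as `α → 0`,
so `c α / α` (if `a ≠ 0`) or `c α / ᾱ` has a limit at `0`. A multiplicative unimodular function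
with a limit at `0` is identically `1`, so `c` is the identity or complex conjugation.
-/

open Complex Filter Topology ComplexConjugate

theorem MonoidHom.norm_map_eq_of_norm_map_le {𝕜 E : Type*} [NormedDivisionRing 𝕜]
    [NormedDivisionRing E] (c : 𝕜 →* E) (hc : ∀ x, ‖c x‖ ≤ ‖x‖) (x : 𝕜) : ‖c x‖ = ‖x‖ := by
  rcases eq_or_ne x 0 with rfl | hx
  · simpa using hc 0
  refine le_antisymm (hc x) ?_
  have hinv : ‖c x‖ * ‖c x⁻¹‖ = 1 := by
    rw [← norm_mul, ← map_mul, mul_inv_cancel₀ hx, map_one, norm_one]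
  calc ‖x‖ = ‖x‖ * (‖c x‖ * ‖c x⁻¹‖) := by rw [hinv, mul_one]
    _ ≤ ‖x‖ * (‖c x‖ * ‖x‖⁻¹) := by gcongr; simpa using hc x⁻¹
    _ = ‖c x‖ := by field_simp [norm_ne_zero_iff.mpr hx]

theorem eq_one_of_map_mul_of_tendsto {𝕜 E : Type*} [NontriviallyNormedField 𝕜]
    [NormedDivisionRing E] {g : 𝕜 → E} (hmul : ∀ x y, g (x * y) = g x * g y)
    (hnorm : ∀ x ≠ 0, ‖g x‖ = 1) {L : E}
    (hL : Tendsto g (𝓝[≠] 0) (𝓝 L)) {x : 𝕜} (hx : x ≠ 0) : g x = 1 := by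
  have hL1 : ‖L‖ = 1 :=
    tendsto_nhds_unique hL.norm (tendsto_const_nhds.congr' (eventually_nhdsWithin_of_forall
      fun y hy => (hnorm y hy).symm))
  have hscale : Tendsto (x * ·) (𝓝[≠] 0) (𝓝[≠] 0) := by
    refine tendsto_nhdsWithin_of_tendsto_nhds_of_eventually_within _ ?_
      (eventually_nhdsWithin_of_forall fun y hy => mul_ne_zero hx hy)
    simpa using ((continuous_const_mul x).tendsto 0).mono_left nhdsWithin_le_nhds
  have hgxL : L = g x * L := tendsto_nhds_unique (hL.comp hscale)
    (by simpa only [Function.comp_def, hmul] using hL.const_mul (g x))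
  have hL0 : L ≠ 0 := by rintro rfl; simp at hL1
  exact (mul_eq_right₀ hL0).mp hgxL.symm

theorem Complex.realLinearMap_apply_eq (f : ℂ →ₗ[ℝ] ℂ) (z : ℂ) :
    f z = (f 1 - I * f I) / 2 * z + (f 1 + I * f I) / 2 * conj z := by
  have hz : f z = z.re * f 1 + z.im * f I := by
    conv_lhs => rw [← z.re_add_im, ← mul_one (z.re : ℂ), ← real_smul, ← real_smul]
    rw [map_add, map_smul, map_smul, real_smul, real_smul]
  conv_rhs => rw [← z.re_add_im]
  rw [hz, map_add, map_mul, conj_ofReal, conj_ofReal, conj_I]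
  linear_combination (z.im : ℂ) * f I * I_mul_I

theorem eq_of_tendsto_const_mul_div {c w : ℂ →* ℂ} (hc : ∀ z, ‖c z‖ = ‖z‖)
    (hw : ∀ z, ‖w z‖ = ‖z‖) {k L : ℂ} (hk : k ≠ 0)
    (h : Tendsto (fun α => k * (c α / w α)) (𝓝[≠] 0) (𝓝 L)) (z : ℂ) : c z = w z := by
  rcases eq_or_ne z 0 with rfl | hz
  · rw [norm_eq_zero.mp ((hc 0).trans norm_zero), norm_eq_zero.mp ((hw 0).trans norm_zero)]
  have hwz : w z ≠ 0 := by rw [← norm_ne_zero_iff, hw]; exact norm_ne_zero_iff.mpr hz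
  have hlim := h.const_mul k⁻¹
  simp only [inv_mul_cancel_left₀ hk] at hlim
  have hmul (x y : ℂ) : c (x * y) / w (x * y) = c x / w x * (c y / w y) := by
    rw [map_mul, map_mul, mul_div_mul_comm]
  have hnorm (x : ℂ) (hx : x ≠ 0) : ‖c x / w x‖ = 1 := by
    rw [norm_div, hc, hw, div_self (norm_ne_zero_iff.mpr hx)]
  exact (div_eq_one_iff_eq hwz).mp (eq_one_of_map_mul_of_tendsto hmul hnorm hlim hz)

theorem eq_id_or_eq_conj_of_tendsto (c : ℂ →* ℂ) (hc : ∀ z, ‖c z‖ = ‖z‖) (f : ℂ →ₗ[ℝ] ℂ)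
    (h : ∀ β, Tendsto (fun α => c α * f (β / α)) (𝓝[≠] 0) (𝓝 (c β))) :
    (∀ z, c z = z) ∨ ∀ z, c z = conj z := by
  obtain ⟨a, b, hf⟩ : ∃ a b : ℂ, ∀ z, f z = a * z + b * conj z :=
    ⟨_, _, Complex.realLinearMap_apply_eq f⟩
  have hexpand (β : ℂ) : ∀ α ≠ 0,
      c α * f (β / α) = a * β * (c α / α) + b * conj β * (c α / conj α) := fun α hα => by
    rw [hf, map_div₀]
    field_simp [(map_ne_zero _).mpr hα]
  have hsum : Tendsto (fun α => a * (c α / α) + b * (c α / conj α)) (𝓝[≠] 0) (𝓝 1) := by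
    refine (map_one c ▸ h 1).congr' (eventually_nhdsWithin_of_forall fun α hα => ?_)
    rw [hexpand 1 α hα]
    simp
  have hdiff : Tendsto (fun α => a * (c α / α) - b * (c α / conj α)) (𝓝[≠] 0)
      (𝓝 (-I * c I)) := by
    refine ((h I).const_mul (-I)).congr' (eventually_nhdsWithin_of_forall fun α hα => ?_)
    rw [hexpand _ α hα, conj_I]
    linear_combination (-(a * (c α / α) - b * (c α / conj α))) * I_mul_I
  by_cases ha : a = 0
  · have hb : Tendsto (fun α => b * (c α / conj α)) (𝓝[≠] 0) (𝓝 1) := by simpa [ha] using hsum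
    have hb0 : b ≠ 0 := by
      rintro rfl
      simp [tendsto_const_nhds_iff] at hb
    exact Or.inr (eq_of_tendsto_const_mul_div (w := (starRingEnd ℂ).toMonoidHom) hc
      (fun z => norm_conj z) hb0 hb)
  · have ha' : Tendsto (fun α => a * (c α / α)) (𝓝[≠] 0) (𝓝 ((1 + -I * c I) / 2)) :=
      ((hsum.add hdiff).div_const 2).congr fun α => by ring
    exact Or.inl (eq_of_tendsto_const_mul_div (w := MonoidHom.id ℂ) hc (fun _ => rfl) ha ha')

theorem jordanS_pow_apply {n : ℕ} (k : ℕ) (i j : Fin n) :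
    (jordanS n ^ k) i j = if (i : ℕ) + k = j then 1 else 0 := by
  induction k generalizing i with
  | zero => simp [Matrix.one_apply, Fin.ext_iff]
  | succ k ih =>
    rw [pow_succ', Matrix.mul_apply]
    simp only [ih]
    simp only [jordanS, Matrix.of_apply, ite_mul, one_mul, zero_mul]
    by_cases hi : (i : ℕ) + 1 < n
    · rw [Finset.sum_eq_single ⟨i + 1, hi⟩ (fun l _ hl => if_neg fun h => hl (Fin.ext h.symm))
        (by simp), if_pos rfl]
      simp only [add_assoc, add_comm 1 k]
    · rw [Finset.sum_eq_zero fun l _ => if_neg (by omega), if_neg (by omega)]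

theorem mul_jordanS_pow_apply_add {n : ℕ} (A : Matrix (Fin n) (Fin n) ℂ) (m : ℕ) (i j : Fin n)
    (h : (j : ℕ) + m < n) : (A * jordanS n ^ m) i ⟨j + m, h⟩ = A i j := by
  rw [Matrix.mul_apply, Finset.sum_eq_single j (fun l _ hl => by
    rw [jordanS_pow_apply, if_neg (fun h => hl (Fin.ext (by simpa using h))), mul_zero]) (by simp)]
  simp [jordanS_pow_apply]

theorem apply_eq_of_mul_jordanS_pow_eq {n : ℕ} {A B : Matrix (Fin n) (Fin n) ℂ} {m : ℕ}
    (h : A * jordanS n ^ m = B * jordanS n ^ m) (i j : Fin n) (hj : (j : ℕ) + m < n) :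
    A i j = B i j := by
  simpa only [mul_jordanS_pow_apply_add] using congrFun (congrFun h i) ⟨j + m, hj⟩

theorem Matrix.sum_norm_sq_apply_le {m n 𝕜 : Type*} [RCLike 𝕜] [Fintype m] [Fintype n]
    [DecidableEq n] (A : Matrix m n 𝕜) (j : n) : ∑ i, ‖A i j‖ ^ 2 ≤ ‖A‖ ^ 2 := by
  have h := A.l2_opNorm_mulVec (EuclideanSpace.single j 1)
  rw [PiLp.norm_single, norm_one, mul_one, EuclideanSpace.norm_eq] at h
  have hcol (i : m) :
      ((EuclideanSpace.equiv m 𝕜).symm (A *ᵥ EuclideanSpace.single j 1)) i = A i j := by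
    simp
  simp only [hcol] at h
  calc ∑ i, ‖A i j‖ ^ 2 = √(∑ i, ‖A i j‖ ^ 2) ^ 2 := (Real.sq_sqrt (by positivity)).symm
    _ ≤ ‖A‖ ^ 2 := by gcongr

theorem Matrix.norm_apply_le {m n 𝕜 : Type*} [RCLike 𝕜] [Fintype m] [Fintype n]
    [DecidableEq n] (A : Matrix m n 𝕜) (i : m) (j : n) : ‖A i j‖ ≤ ‖A‖ := by
  have h : ‖A i j‖ ^ 2 ≤ ‖A‖ ^ 2 := (Finset.single_le_sum (fun i _ => by positivity)
    (Finset.mem_univ i)).trans (A.sum_norm_sq_apply_le j)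
  exact (pow_le_pow_iff_left₀ (norm_nonneg _) (norm_nonneg _) two_ne_zero).mp h

theorem Matrix.norm_smul_one {m : Type*} [Fintype m] [DecidableEq m] [Nonempty m] (α : ℂ) :
    ‖α • (1 : Matrix m m ℂ)‖ = ‖α‖ := by
  rw [norm_smul, CStarRing.norm_one, mul_one]

namespace toeplitzUpper

variable {n : ℕ} {X Y : Matrix (Fin n) (Fin n) ℂ}

theorem add_mem (hX : X ∈ toeplitzUpper n) (hY : Y ∈ toeplitzUpper n) :
    X + Y ∈ toeplitzUpper n :=
  ⟨fun i j h => by simp [hX.1 i j h, hY.1 i j h],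
    fun i j i' j' h => by simp [hX.2 i j i' j' h, hY.2 i j i' j' h]⟩

theorem smul_mem (α : ℂ) (hX : X ∈ toeplitzUpper n) : α • X ∈ toeplitzUpper n :=
  ⟨fun i j h => by simp [hX.1 i j h], fun i j i' j' h => by simp [hX.2 i j i' j' h]⟩

theorem jordanS_pow_mem (k : ℕ) : jordanS n ^ k ∈ toeplitzUpper n := by
  refine ⟨fun i j h => ?_, fun i j i' j' h => ?_⟩ <;> simp only [jordanS_pow_apply]
  · exact if_neg (by omega)
  · exact if_congr (by omega) rfl rfl

theorem one_mem : (1 : Matrix (Fin n) (Fin n) ℂ) ∈ toeplitzUpper n := by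
  simpa using jordanS_pow_mem (n := n) 0

theorem jordanS_mem : jordanS n ∈ toeplitzUpper n := by
  simpa using jordanS_pow_mem (n := n) 1

theorem one_add_smul_jordanS_mem (γ : ℂ) : 1 + γ • jordanS n ∈ toeplitzUpper n :=
  add_mem one_mem (smul_mem γ jordanS_mem)

theorem one_add_smul_jordanS_apply_zero_zero (γ : ℂ) :
    (1 + γ • jordanS (n + 1)) 0 0 = 1 := by
  simp [jordanS]

theorem one_add_smul_jordanS_apply_zero_one (γ : ℂ) :
    (1 + γ • jordanS (n + 2)) 0 1 = γ := by
  simp [jordanS]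

theorem apply_eq_of_apply_zero_eq [NeZero n] (hX : X ∈ toeplitzUpper n)
    (hY : Y ∈ toeplitzUpper n) {j : Fin n} (h : ∀ l ≤ j, X 0 l = Y 0 l) (i : Fin n) :
    X i j = Y i j := by
  by_cases hij : (j : ℕ) < i
  · rw [hX.1 i j hij, hY.1 i j hij]
  · let l : Fin n := ⟨j - i, by omega⟩
    have hl : (j : ℤ) - i = (l : ℤ) - (0 : Fin n) := by simp [l]; omega
    rw [hX.2 i j 0 l hl, hY.2 i j 0 l hl, h l (Fin.le_iff_val_le_val.mpr (Nat.sub_le _ _))]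

theorem mul_jordanS_pow_eq [NeZero n] (hX : X ∈ toeplitzUpper n) (hY : Y ∈ toeplitzUpper n)
    {m : ℕ} (h : ∀ j : Fin n, (j : ℕ) + m < n → X 0 j = Y 0 j) :
    X * jordanS n ^ m = Y * jordanS n ^ m := by
  ext i j
  simp only [Matrix.mul_apply, jordanS_pow_apply, mul_ite, mul_one, mul_zero]
  refine Finset.sum_congr rfl fun l _ => ite_congr rfl (fun hl => ?_) fun _ => rfl
  refine apply_eq_of_apply_zero_eq hX hY (fun l' hl' => h l' ?_) i
  have := Fin.le_iff_val_le_val.mp hl'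
  omega

theorem mul_apply_zero_zero [NeZero n] (A : Matrix (Fin n) (Fin n) ℂ) (hY : Y ∈ toeplitzUpper n) :
    (A * Y) 0 0 = A 0 0 * Y 0 0 := by
  rw [Matrix.mul_apply, Finset.sum_eq_single 0 (fun l _ hl => ?_) (by simp)]
  rw [hY.1 l 0 (by have := Fin.val_ne_of_ne hl; simp only [Fin.val_zero] at this ⊢; omega),
    mul_zero]

theorem mul_apply_zero_one {Y : Matrix (Fin (n + 2)) (Fin (n + 2)) ℂ}
    (A : Matrix (Fin (n + 2)) (Fin (n + 2)) ℂ) (hY : Y ∈ toeplitzUpper (n + 2)) :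
    (A * Y) 0 1 = A 0 0 * Y 0 1 + A 0 1 * Y 0 0 := by
  rw [Matrix.mul_apply, Fin.sum_univ_succ, Fin.sum_univ_succ,
    Finset.sum_eq_zero fun l _ => by rw [hY.1 _ 1 (by simp), mul_zero], add_zero]
  rw [Fin.succ_zero_eq_one, hY.2 1 1 0 0 (by simp)]

theorem eq_smul_one_of_norm_le {X : Matrix (Fin (n + 1)) (Fin (n + 1)) ℂ}
    (hX : X ∈ toeplitzUpper (n + 1)) (h : ‖X‖ ≤ ‖X 0 0‖) : X = X 0 0 • 1 := by
  have hlast : X (Fin.last n) (Fin.last n) = X 0 0 := hX.2 _ _ _ _ (by simp)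
  have hcol : ∀ i : Fin n, X i.castSucc (Fin.last n) = 0 := by
    have hsum := X.sum_norm_sq_apply_le (Fin.last n)
    rw [Fin.sum_univ_castSucc, hlast] at hsum
    have hzero : ∑ i : Fin n, ‖X i.castSucc (Fin.last n)‖ ^ 2 = 0 :=
      le_antisymm (by nlinarith [norm_nonneg X]) (by positivity)
    intro i
    simpa using (Finset.sum_eq_zero_iff_of_nonneg fun i _ => by positivity).mp hzero i
      (Finset.mem_univ _)
  ext i j
  rcases lt_trichotomy (i : ℕ) j with hij | hij | hij
  · have hk : (i : ℕ) + n - j < n := by omega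
    rw [hX.2 i j (⟨i + n - j, hk⟩ : Fin n).castSucc (Fin.last n) (by simp; omega), hcol,
      Matrix.smul_apply, Matrix.one_apply_ne (Fin.ne_of_val_ne hij.ne), smul_zero]
  · obtain rfl := Fin.ext hij
    rw [hX.2 i i 0 0 (by simp), Matrix.smul_apply, Matrix.one_apply_eq, smul_eq_mul, mul_one]
  · rw [hX.1 i j hij, Matrix.smul_apply, Matrix.one_apply_ne (Fin.ne_of_val_ne hij.ne'), smul_zero]

end toeplitzUpper

structure IsMulIsometryFixingJordan (n : ℕ)
    (φ : Matrix (Fin n) (Fin n) ℂ → Matrix (Fin n) (Fin n) ℂ) : Prop where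
  mapsTo : Set.MapsTo φ (toeplitzUpper n) (toeplitzUpper n)
  map_mul : ∀ X ∈ toeplitzUpper n, ∀ Y ∈ toeplitzUpper n, φ (X * Y) = φ X * φ Y
  norm_map : ∀ A ∈ toeplitzUpper n, ‖φ A‖ = ‖A‖
  map_jordanS : φ (jordanS n) = jordanS n

namespace IsMulIsometryFixingJordan

open toeplitzUpper

theorem map_jordanS_pow_succ {n : ℕ} {φ : Matrix (Fin n) (Fin n) ℂ → Matrix (Fin n) (Fin n) ℂ}
    (hφ : IsMulIsometryFixingJordan n φ) (k : ℕ) :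
    φ (jordanS n ^ (k + 1)) = jordanS n ^ (k + 1) := by
  induction k with
  | zero => simpa using hφ.map_jordanS
  | succ k ih =>
    rw [pow_succ, hφ.map_mul _ (jordanS_pow_mem _) _ jordanS_mem, ih, hφ.map_jordanS]

variable {n : ℕ} {φ : Matrix (Fin (n + 2)) (Fin (n + 2)) ℂ → Matrix (Fin (n + 2)) (Fin (n + 2)) ℂ}
  {X : Matrix (Fin (n + 2)) (Fin (n + 2)) ℂ}

theorem apply_zero_zero_eq_one (hφ : IsMulIsometryFixingJordan (n + 2) φ)
    (hX : X ∈ toeplitzUpper (n + 2)) (h : X 0 0 = 1) : φ X 0 0 = 1 := by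
  have hXS : X * jordanS (n + 2) ^ (n + 1) = 1 * jordanS (n + 2) ^ (n + 1) :=
    mul_jordanS_pow_eq hX one_mem fun j hj => by
      obtain rfl : j = 0 := Fin.ext (by rw [Fin.val_zero]; omega)
      simpa using h
  have hφXS : φ X * jordanS (n + 2) ^ (n + 1) = 1 * jordanS (n + 2) ^ (n + 1) := by
    rw [← hφ.map_jordanS_pow_succ, ← hφ.map_mul _ hX _ (jordanS_pow_mem _), hXS, one_mul,
      one_mul]
  simpa using apply_eq_of_mul_jordanS_pow_eq hφXS 0 0 (by simp)

def scalarHom (hφ : IsMulIsometryFixingJordan (n + 2) φ) : ℂ →* ℂ where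
  toFun α := φ (α • 1) 0 0
  map_one' := by
    rw [one_smul]
    exact hφ.apply_zero_zero_eq_one one_mem rfl
  map_mul' α β := by
    rw [mul_smul, ← smul_one_mul α (β • 1 : Matrix (Fin (n + 2)) (Fin (n + 2)) ℂ),
      hφ.map_mul _ (smul_mem α one_mem) _ (smul_mem β one_mem),
      mul_apply_zero_zero _ (hφ.mapsTo (smul_mem β one_mem))]

theorem scalarHom_apply (hφ : IsMulIsometryFixingJordan (n + 2) φ) (α : ℂ) :
    hφ.scalarHom α = φ (α • 1) 0 0 :=
  rfl

theorem norm_scalarHom (hφ : IsMulIsometryFixingJordan (n + 2) φ) (α : ℂ) :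
    ‖hφ.scalarHom α‖ = ‖α‖ :=
  hφ.scalarHom.norm_map_eq_of_norm_map_le (fun α => (Matrix.norm_apply_le _ 0 0).trans_eq
    ((hφ.norm_map _ (smul_mem α one_mem)).trans (Matrix.norm_smul_one α))) α

theorem map_smul_one (hφ : IsMulIsometryFixingJordan (n + 2) φ) (α : ℂ) :
    φ (α • 1) = hφ.scalarHom α • 1 :=
  eq_smul_one_of_norm_le (hφ.mapsTo (smul_mem α one_mem)) <| by
    rw [hφ.norm_map _ (smul_mem α one_mem), Matrix.norm_smul_one, ← hφ.scalarHom_apply,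
      norm_scalarHom]

theorem map_smul (hφ : IsMulIsometryFixingJordan (n + 2) φ) (α : ℂ)
    {A : Matrix (Fin (n + 2)) (Fin (n + 2)) ℂ} (hA : A ∈ toeplitzUpper (n + 2)) :
    φ (α • A) = hφ.scalarHom α • φ A := by
  rw [← smul_one_mul, hφ.map_mul _ (smul_mem α one_mem) _ hA, hφ.map_smul_one, smul_one_mul]

theorem map_one (hφ : IsMulIsometryFixingJordan (n + 2) φ) : φ 1 = 1 := by
  simpa using hφ.map_smul_one 1

theorem map_jordanS_pow (hφ : IsMulIsometryFixingJordan (n + 2) φ) (k : ℕ) :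
    φ (jordanS (n + 2) ^ k) = jordanS (n + 2) ^ k := by
  cases k with
  | zero => simpa using hφ.map_one
  | succ k => exact hφ.map_jordanS_pow_succ k

theorem apply_zero_one_eq (hφ : IsMulIsometryFixingJordan (n + 2) φ)
    (hX : X ∈ toeplitzUpper (n + 2)) (h : X 0 0 = 1) :
    φ X 0 1 = φ (1 + X 0 1 • jordanS (n + 2)) 0 1 := by
  have hXS : X * jordanS (n + 2) ^ n = (1 + X 0 1 • jordanS (n + 2)) * jordanS (n + 2) ^ n :=
    mul_jordanS_pow_eq hX (one_add_smul_jordanS_mem _) fun j hj => by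
      obtain rfl | rfl : j = 0 ∨ j = 1 := by
        simp only [Fin.ext_iff, Fin.val_zero, Fin.val_one]
        omega
      · simpa [jordanS] using h
      · simp [jordanS]
  have hφXS : φ X * jordanS (n + 2) ^ n =
      φ (1 + X 0 1 • jordanS (n + 2)) * jordanS (n + 2) ^ n := by
    rw [← hφ.map_jordanS_pow, ← hφ.map_mul _ hX _ (jordanS_pow_mem _), hXS,
      hφ.map_mul _ (one_add_smul_jordanS_mem _) _ (jordanS_pow_mem _)]
  exact apply_eq_of_mul_jordanS_pow_eq hφXS 0 1 (by rw [Fin.val_one]; omega)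

def superdiagHom (hφ : IsMulIsometryFixingJordan (n + 2) φ) : ℂ →+ ℂ where
  toFun γ := φ (1 + γ • jordanS (n + 2)) 0 1
  map_zero' := by simp [hφ.map_one]
  map_add' x y := by
    set Y := (1 + x • jordanS (n + 2)) * (1 + y • jordanS (n + 2))
    have hY : Y = 1 + (x + y) • jordanS (n + 2) + (x * y) • jordanS (n + 2) ^ 2 := by
      simp only [Y, add_mul, mul_add, one_mul, mul_one, smul_mul_smul_comm, pow_two, add_smul]
      abel
    have hYmem : Y ∈ toeplitzUpper (n + 2) := hY ▸
      add_mem (one_add_smul_jordanS_mem _) (smul_mem _ (jordanS_pow_mem 2))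
    have hY00 : Y 0 0 = 1 := by
      simp only [Y, mul_apply_zero_zero _ (one_add_smul_jordanS_mem y),
        one_add_smul_jordanS_apply_zero_zero, mul_one]
    have hY01 : Y 0 1 = x + y := by
      simp only [Y, mul_apply_zero_one _ (one_add_smul_jordanS_mem y),
        one_add_smul_jordanS_apply_zero_zero, one_add_smul_jordanS_apply_zero_one]
      ring
    have hφ00 (γ : ℂ) : φ (1 + γ • jordanS (n + 2)) 0 0 = 1 :=
      hφ.apply_zero_zero_eq_one (one_add_smul_jordanS_mem γ)
        (one_add_smul_jordanS_apply_zero_zero γ)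
    rw [← hY01, ← hφ.apply_zero_one_eq hYmem hY00,
      hφ.map_mul _ (one_add_smul_jordanS_mem x) _ (one_add_smul_jordanS_mem y),
      mul_apply_zero_one _ (hφ.mapsTo (one_add_smul_jordanS_mem y)), hφ00, hφ00]
    ring

theorem superdiagHom_apply (hφ : IsMulIsometryFixingJordan (n + 2) φ) (γ : ℂ) :
    hφ.superdiagHom γ = φ (1 + γ • jordanS (n + 2)) 0 1 :=
  rfl

theorem continuous_superdiagHom (hφ : IsMulIsometryFixingJordan (n + 2) φ)
    (hcont : ContinuousOn φ (toeplitzUpper (n + 2))) : Continuous hφ.superdiagHom :=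
  (hcont.comp_continuous (by fun_prop) one_add_smul_jordanS_mem).matrix_elem 0 1

/-- Continuity of `φ` at `β • S` along `α • 1 + β • S = α • (1 + (β / α) • S)`. -/
theorem tendsto_scalarHom_mul_superdiagHom (hφ : IsMulIsometryFixingJordan (n + 2) φ)
    (hcont : ContinuousOn φ (toeplitzUpper (n + 2))) (β : ℂ) :
    Tendsto (fun α => hφ.scalarHom α * hφ.superdiagHom (β / α)) (𝓝[≠] 0)
      (𝓝 (hφ.scalarHom β)) := by
  have hpath : Continuous fun α : ℂ => φ (α • 1 + β • jordanS (n + 2)) :=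
    hcont.comp_continuous (by fun_prop) fun α =>
      add_mem (smul_mem α one_mem) (smul_mem β jordanS_mem)
  have hlim := ((hpath.matrix_elem 0 1).tendsto 0).mono_left (nhdsWithin_le_nhds (s := {0}ᶜ))
  rw [zero_smul, zero_add, hφ.map_smul β jordanS_mem, hφ.map_jordanS] at hlim
  refine (by simpa [jordanS] using hlim :
      Tendsto (fun α => φ (α • 1 + β • jordanS (n + 2)) 0 1) _ _).congr'
    (eventually_nhdsWithin_of_forall fun α hα => ?_)
  beta_reduce
  rw [superdiagHom_apply, ← smul_eq_mul, ← Matrix.smul_apply,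
    ← hφ.map_smul α (one_add_smul_jordanS_mem _), smul_add, smul_smul, mul_div_cancel₀ _ hα]

end IsMulIsometryFixingJordan

theorem stmt3 (n : ℕ) (hn : 1 < n) (φ : Matrix (Fin n) (Fin n) ℂ → Matrix (Fin n) (Fin n) ℂ)
    (hrange : ∀ A ∈ toeplitzUpper n, φ A ∈ toeplitzUpper n)
    (hcont : ContinuousOn φ (toeplitzUpper n))
    (hmul : ∀ X ∈ toeplitzUpper n, ∀ Y ∈ toeplitzUpper n, φ (X * Y) = φ X * φ Y)
    (hnorm : ∀ A ∈ toeplitzUpper n, ‖φ A‖ = ‖A‖)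
    (hS : φ (jordanS n) = jordanS n) :
    (∀ (α : ℂ), ∀ A ∈ toeplitzUpper n, φ (α • A) = α • φ A) ∨
      (∀ (α : ℂ), ∀ A ∈ toeplitzUpper n, φ (α • A) = (starRingEnd ℂ) α • φ A) := by
  obtain ⟨n, rfl⟩ : ∃ m, n = m + 2 := ⟨n - 2, by omega⟩
  have hφ : IsMulIsometryFixingJordan (n + 2) φ := ⟨hrange, hmul, hnorm, hS⟩
  rcases eq_id_or_eq_conj_of_tendsto hφ.scalarHom hφ.norm_scalarHom
    (hφ.superdiagHom.toRealLinearMap (hφ.continuous_superdiagHom hcont)).toLinearMap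
    (hφ.tendsto_scalarHom_mul_superdiagHom hcont) with hc | hc
  · exact Or.inl fun α A hA => by rw [hφ.map_smul α hA, hc]
  · exact Or.inr fun α A hA => by rw [hφ.map_smul α hA, hc]
end
end

section
/- Let ℒ be a linear subspace of Mₙ(ℂ) containing the identity matrix and let φ : ℒ → Mₙ(ℂ) be a unital linear isometry (linear with φ(I) = I and ‖φ(R)‖ = ‖R‖ for all R ∈ ℒ). Then φ preserves the numerical range: for every R ∈ ℒ, W(φ(R)) = W(R), where W(T) = { ⟨Tξ, ξ⟩ : ξ ∈ ℂⁿ, ‖ξ‖ = 1 }. -/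
open scoped Matrix Matrix.Norms.L2Operator

noncomputable section

/-- The numerical range `W(T) = { ⟨Tξ, ξ⟩ : ξ ∈ ℂⁿ, ‖ξ‖ = 1 }` of an `n × n` complex matrix. -/
def numericalRange {n : ℕ} (T : Matrix (Fin n) (Fin n) ℂ) : Set ℂ :=
  {z | ∃ ξ : EuclideanSpace ℂ (Fin n), ‖ξ‖ = 1 ∧ z = inner ℂ ξ (Matrix.toEuclideanLin T ξ)}

/-!
For a finite-dimensional complex inner product space, `W(T)` is the intersection of the closed
discs centred at `c` of radius `‖T - c‖`. One inclusion is Cauchy–Schwarz. For the other, `W(T)` is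
compact and convex (Toeplitz–Hausdorff), so a point `z ∉ W(T)` can be separated from it: after an
affine change `S = c (T - z)` the range `W(S)` lies in the half-plane `re ≤ -1`, and then
`‖S + r‖ < r` for large `r`, i.e. `z` misses the disc centred at `z - r / c`. A unital isometry `φ`
satisfies `φ R - c = φ (R - c)`, so it preserves all these radii and hence the numerical range.
-/

open scoped InnerProductSpace ComplexConjugate
open Metric Set

theorem Complex.exists_norm_eq_one_im_mul_eq_zero (c : ℂ) :
    ∃ w : ℂ, ‖w‖ = 1 ∧ (w * c).im = 0 := by
  refine ⟨exp (-(arg c : ℂ) * I), by simpa using norm_exp_ofReal_mul_I (-arg c), ?_⟩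
  conv_lhs => rw [← norm_mul_exp_arg_mul_I c]
  rw [mul_left_comm, ← Complex.exp_add]
  simp

theorem Convex.exists_re_mul_sub_le_neg_one_of_notMem {s : Set ℂ} (hs : Convex ℝ s)
    (hsc : IsClosed s) {z : ℂ} (hz : z ∉ s) : ∃ c : ℂ, ∀ w ∈ s, (c * (w - z)).re ≤ -1 := by
  obtain ⟨f, u, hfs, hfz⟩ := RCLike.geometric_hahn_banach_closed_point (𝕜 := ℂ) hs hsc hz
  have hf : ∀ w, f w = f 1 * w := fun w => by simpa [mul_comm] using f.map_smul w 1
  have hε : 0 < (f z).re - u := sub_pos.2 hfz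
  refine ⟨f 1 / ((f z).re - u : ℝ), fun w hw => ?_⟩
  rw [div_mul_eq_mul_div, mul_sub, ← hf, ← hf, Complex.div_ofReal_re, Complex.sub_re,
    div_le_iff₀ hε]
  have hw' := hfs w hw
  rw [RCLike.re_to_complex] at hw' hfz
  linarith

variable {E : Type*} [NormedAddCommGroup E] [InnerProductSpace ℂ E]

namespace ContinuousLinearMap

def numericalRange (T : E →L[ℂ] E) : Set ℂ :=
  {z | ∃ x : E, ‖x‖ = 1 ∧ z = ⟪x, T x⟫_ℂ}

variable (T : E →L[ℂ] E)

theorem inner_map_self_div_norm_sq_mem_numericalRange {x : E} (hx : x ≠ 0) :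
    ⟪x, T x⟫_ℂ / (‖x‖ ^ 2 : ℝ) ∈ T.numericalRange := by
  have hx' : ‖x‖ ≠ 0 := norm_ne_zero_iff.mpr hx
  refine ⟨((‖x‖⁻¹ : ℝ) : ℂ) • x, ?_, ?_⟩
  · rw [norm_smul, Complex.norm_real, norm_inv, norm_norm, inv_mul_cancel₀ hx']
  · rw [map_smul, inner_smul_left, inner_smul_right, Complex.conj_ofReal]
    push_cast
    field_simp

theorem numericalRange_smul_sub_smul_one (a b : ℂ) :
    (a • (T - b • 1)).numericalRange = (fun w => a * (w - b)) '' T.numericalRange := by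
  have key : ∀ x : E, ‖x‖ = 1 → ⟪x, (a • (T - b • 1)) x⟫_ℂ = a * (⟪x, T x⟫_ℂ - b) := by
    intro x hx
    simp [inner_self_eq_norm_sq_to_K, hx]
  ext w
  constructor
  · rintro ⟨x, hx, rfl⟩
    exact ⟨_, ⟨x, hx, rfl⟩, (key x hx).symm⟩
  · rintro ⟨_, ⟨x, hx, rfl⟩, rfl⟩
    exact ⟨x, hx, (key x hx).symm⟩

theorem norm_le_of_mem_numericalRange {w : ℂ} (hw : w ∈ T.numericalRange) : ‖w‖ ≤ ‖T‖ := by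
  obtain ⟨x, hx, rfl⟩ := hw
  calc ‖⟪x, T x⟫_ℂ‖ ≤ ‖x‖ * ‖T x‖ := norm_inner_le_norm _ _
    _ ≤ ‖x‖ * (‖T‖ * ‖x‖) := by gcongr; exact T.le_opNorm x
    _ = ‖T‖ := by rw [hx]; ring

theorem numericalRange_subset_closedBall (c : ℂ) :
    T.numericalRange ⊆ closedBall c ‖T - c • 1‖ := by
  intro w hw
  have hw' : w - c ∈ ((1 : ℂ) • (T - c • 1)).numericalRange := by
    rw [numericalRange_smul_sub_smul_one]
    exact ⟨w, hw, one_mul _⟩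
  simpa [dist_eq_norm] using norm_le_of_mem_numericalRange _ hw'

theorem isCompact_numericalRange [ProperSpace E] : IsCompact T.numericalRange := by
  have : T.numericalRange = (fun x => ⟪x, T x⟫_ℂ) '' sphere 0 1 := by
    ext
    simp [ContinuousLinearMap.numericalRange, eq_comm]
  rw [this]
  exact (isCompact_sphere 0 1).image (by fun_prop)

theorem numericalRange_nonempty [Nontrivial E] : T.numericalRange.Nonempty :=
  let ⟨x, hx⟩ := exists_norm_eq E zero_le_one
  ⟨_, x, hx, rfl⟩

variable {T}

theorem inner_map_self_smul_add_one_sub_smul {x y : E} (hx : ⟪x, T x⟫_ℂ = 0)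
    (hy : ⟪y, T y⟫_ℂ = 1) (s : ℝ) :
    ⟪(s : ℂ) • x + ((1 - s : ℝ) : ℂ) • y, T ((s : ℂ) • x + ((1 - s : ℝ) : ℂ) • y)⟫_ℂ =
      ((1 - s) ^ 2 : ℝ) + (s * (1 - s) : ℝ) * (⟪x, T y⟫_ℂ + ⟪y, T x⟫_ℂ) := by
  simp only [map_add, map_smul, inner_add_left, inner_add_right, inner_smul_left,
    inner_smul_right, Complex.conj_ofReal, hx, hy]
  push_cast
  ring

theorem smul_add_one_sub_smul_ne_zero {x y : E} (hx0 : x ≠ 0) (hx : ⟪x, T x⟫_ℂ = 0)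
    (hy : ⟪y, T y⟫_ℂ = 1) (s : ℝ) : (s : ℂ) • x + ((1 - s : ℝ) : ℂ) • y ≠ 0 := by
  intro h
  have hxy : ((1 - s : ℝ) : ℂ) • y = -((s : ℂ) • x) := eq_neg_of_add_eq_zero_right h
  have hs : ((1 - s) ^ 2 : ℝ) = (0 : ℂ) := by
    have := congrArg (fun v => ⟪v, T v⟫_ℂ) hxy
    simp only [map_neg, inner_neg_neg, map_smul, inner_smul_left, inner_smul_right,
      Complex.conj_ofReal, hx, hy] at this
    push_cast at this ⊢
    linear_combination this
  have : s = 1 := by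
    have := Complex.ofReal_eq_zero.1 hs
    nlinarith
  subst this
  simp [hx0] at h

theorem ofReal_mem_numericalRange_of_zero_mem_of_one_mem (h0 : (0 : ℂ) ∈ T.numericalRange)
    (h1 : (1 : ℂ) ∈ T.numericalRange) {t : ℝ} (ht : t ∈ Icc (0 : ℝ) 1) :
    (t : ℂ) ∈ T.numericalRange := by
  obtain ⟨x₀, hx₀, hx₀T⟩ := h0
  obtain ⟨y, hy, hyT⟩ := h1
  replace hyT := hyT.symm
  -- Rotating `x₀` by a unimodular `w` makes the cross term real, so that the quadratic form is
  -- real along the segment from `y` to `x` and the intermediate value theorem applies.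
  obtain ⟨w, hw, hwim⟩ :=
    Complex.exists_norm_eq_one_im_mul_eq_zero (⟪y, T x₀⟫_ℂ - conj ⟪x₀, T y⟫_ℂ)
  set x := w • x₀
  have hx : ‖x‖ = 1 := by rw [norm_smul, hw, hx₀, one_mul]
  have hxT : ⟪x, T x⟫_ℂ = 0 := by
    rw [map_smul, inner_smul_left, inner_smul_right, ← hx₀T, mul_zero, mul_zero]
  obtain ⟨κ, hκ⟩ : ∃ κ : ℝ, ⟪x, T y⟫_ℂ + ⟪y, T x⟫_ℂ = κ := by
    refine ⟨(⟪x, T y⟫_ℂ + ⟪y, T x⟫_ℂ).re, Complex.ext (by simp) ?_⟩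
    simp only [x, map_smul, inner_smul_left, inner_smul_right, Complex.add_im,
      Complex.mul_im, Complex.sub_im, Complex.sub_re, Complex.conj_re, Complex.conj_im] at hwim ⊢
    simp only [Complex.ofReal_im]
    linarith
  set u : ℝ → E := fun s => (s : ℂ) • x + ((1 - s : ℝ) : ℂ) • y
  have hu : ∀ s, u s ≠ 0 :=
    smul_add_one_sub_smul_ne_zero (norm_ne_zero_iff.1 (by simp [hx])) hxT hyT
  set g : ℝ → ℝ := fun s => ((1 - s) ^ 2 + s * (1 - s) * κ) / ‖u s‖ ^ 2
  have hg : ∀ s, (g s : ℂ) = ⟪u s, T (u s)⟫_ℂ / (‖u s‖ ^ 2 : ℝ) := by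
    intro s
    rw [inner_map_self_smul_add_one_sub_smul hxT hyT, hκ]
    push_cast [g]
    ring
  have hgc : Continuous g :=
    Continuous.div (by fun_prop) (by fun_prop) fun s => pow_ne_zero 2 (norm_ne_zero_iff.2 (hu s))
  obtain ⟨s, -, hs⟩ :=
    intermediate_value_Icc' zero_le_one hgc.continuousOn (by simpa [g, u, hx, hy] using ht)
  rw [← hs, hg]
  exact T.inner_map_self_div_norm_sq_mem_numericalRange (hu s)

theorem re_inner_map_self_le_neg_norm_sq (h : ∀ w ∈ T.numericalRange, w.re ≤ -1) (x : E) :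
    (⟪x, T x⟫_ℂ).re ≤ -‖x‖ ^ 2 := by
  rcases eq_or_ne x 0 with rfl | hx
  · simp
  have hW := h _ (T.inner_map_self_div_norm_sq_mem_numericalRange hx)
  rwa [Complex.div_ofReal_re, div_le_iff₀ (by positivity), neg_one_mul] at hW

theorem exists_norm_add_smul_one_lt (h : ∀ w ∈ T.numericalRange, w.re ≤ -1) :
    ∃ r : ℝ, 0 < r ∧ ‖T + (r : ℂ) • 1‖ < r := by
  -- `‖(T + r) x‖² = ‖T x‖² + 2 r re ⟪x, T x⟫ + r² ‖x‖² ≤ (‖T‖² - 2 r + r²) ‖x‖²`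
  set r := ‖T‖ ^ 2 + 1
  have hr : ‖T‖ ^ 2 < r := lt_add_one _
  have hr0 : 0 < r := by positivity
  have hsq : ∀ x, ‖(T + (r : ℂ) • 1) x‖ ^ 2 ≤ (r ^ 2 - r) * ‖x‖ ^ 2 := by
    intro x
    have hre : RCLike.re ⟪T x, (r : ℂ) • x⟫_ℂ = r * (⟪x, T x⟫_ℂ).re := by
      rw [inner_smul_right, RCLike.re_to_complex, Complex.re_ofReal_mul, ← inner_conj_symm,
        Complex.conj_re]
    have hTx : ‖T x‖ ^ 2 ≤ ‖T‖ ^ 2 * ‖x‖ ^ 2 := by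
      rw [← mul_pow]; gcongr; exact T.le_opNorm x
    rw [add_apply, smul_apply, one_apply_eq_self, norm_add_sq (𝕜 := ℂ), hre, norm_smul,
      Complex.norm_real, Real.norm_of_nonneg hr0.le]
    nlinarith [re_inner_map_self_le_neg_norm_sq h x, sq_nonneg ‖x‖]
  refine ⟨r, hr0, (opNorm_le_bound _ (Real.sqrt_nonneg (r ^ 2 - r)) fun x => ?_).trans_lt ?_⟩
  · rw [← pow_le_pow_iff_left₀ (norm_nonneg _) (by positivity) two_ne_zero, mul_pow,
      Real.sq_sqrt (by nlinarith)]
    exact hsq x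
  · rw [Real.sqrt_lt' hr0]
    linarith

variable (T)

theorem convex_numericalRange : Convex ℝ T.numericalRange := by
  intro a ha b hb s t hs ht hst
  rcases eq_or_ne a b with rfl | hab
  · rwa [← add_smul, hst, one_smul]
  have hba : b - a ≠ 0 := sub_ne_zero.2 hab.symm
  have hS := T.numericalRange_smul_sub_smul_one (b - a)⁻¹ a
  have h0 : (0 : ℂ) ∈ ((b - a)⁻¹ • (T - a • 1)).numericalRange := hS ▸ ⟨a, ha, by simp⟩
  have h1 : (1 : ℂ) ∈ ((b - a)⁻¹ • (T - a • 1)).numericalRange :=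
    hS ▸ ⟨b, hb, inv_mul_cancel₀ hba⟩
  obtain ⟨w, hw, hwt⟩ := hS ▸ ofReal_mem_numericalRange_of_zero_mem_of_one_mem h0 h1
    ⟨ht, by linarith⟩
  convert hw using 1
  rw [Complex.real_smul, Complex.real_smul, eq_sub_of_add_eq hst]
  field_simp at hwt
  push_cast
  linear_combination -hwt

theorem exists_norm_sub_smul_one_lt_of_notMem [ProperSpace E] {z : ℂ}
    (hz : z ∉ T.numericalRange) : ∃ c : ℂ, ‖T - c • 1‖ < ‖z - c‖ := by
  rcases subsingleton_or_nontrivial E with hE | hE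
  · exact ⟨z + 1, by simp [Subsingleton.elim (T - (z + 1) • 1) 0]⟩
  obtain ⟨c, hc⟩ := T.convex_numericalRange.exists_re_mul_sub_le_neg_one_of_notMem
    T.isCompact_numericalRange.isClosed hz
  have hc0 : c ≠ 0 := by
    rintro rfl
    obtain ⟨w, hw⟩ := T.numericalRange_nonempty
    have := hc w hw
    norm_num at this
  have hS : ∀ w ∈ (c • (T - z • 1)).numericalRange, w.re ≤ -1 := by
    rw [numericalRange_smul_sub_smul_one]
    rintro _ ⟨w, hw, rfl⟩
    exact hc w hw
  obtain ⟨r, hr, hSr⟩ := exists_norm_add_smul_one_lt hS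
  have hT : T - (z - r / c) • 1 = c⁻¹ • (c • (T - z • 1) + (r : ℂ) • 1) := by
    rw [smul_add, inv_smul_smul₀ hc0, smul_smul, inv_mul_eq_div]
    module
  refine ⟨z - r / c, ?_⟩
  rw [hT, norm_smul, sub_sub_cancel, norm_div, norm_inv, Complex.norm_real,
    Real.norm_of_nonneg hr.le, inv_mul_eq_div]
  exact div_lt_div_of_pos_right hSr (norm_pos_iff.2 hc0)

theorem numericalRange_eq_iInter_closedBall [ProperSpace E] :
    T.numericalRange = ⋂ c : ℂ, closedBall c ‖T - c • 1‖ := by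
  refine Subset.antisymm (subset_iInter T.numericalRange_subset_closedBall) fun z hz => ?_
  by_contra hzW
  obtain ⟨c, hc⟩ := T.exists_norm_sub_smul_one_lt_of_notMem hzW
  exact (mem_closedBall.1 (mem_iInter.1 hz c)).not_gt (by rwa [dist_eq_norm])

end ContinuousLinearMap

theorem numericalRange_eq_iInter_closedBall {n : ℕ} (A : Matrix (Fin n) (Fin n) ℂ) :
    numericalRange A = ⋂ c : ℂ, closedBall c ‖A - c • 1‖ := by
  have : numericalRange A = (Matrix.toEuclideanCLM (𝕜 := ℂ) A).numericalRange := rfl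
  simp_rw [this, ContinuousLinearMap.numericalRange_eq_iInter_closedBall, Matrix.cstar_norm_def,
    map_sub, map_smul, map_one]

theorem stmt9 (n : ℕ) (L : Submodule ℂ (Matrix (Fin n) (Fin n) ℂ))
    (hI : (1 : Matrix (Fin n) (Fin n) ℂ) ∈ L)
    (φ : Matrix (Fin n) (Fin n) ℂ → Matrix (Fin n) (Fin n) ℂ)
    (hadd : ∀ A ∈ L, ∀ B ∈ L, φ (A + B) = φ A + φ B)
    (hsmul : ∀ (c : ℂ), ∀ A ∈ L, φ (c • A) = c • φ A)
    (hone : φ 1 = 1)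
    (hnorm : ∀ R ∈ L, ‖φ R‖ = ‖R‖) :
    ∀ R ∈ L, numericalRange (φ R) = numericalRange R := by
  intro R hR
  have hshift : ∀ c : ℂ, φ (R - c • 1) = φ R - c • 1 := by
    intro c
    rw [sub_eq_add_neg, ← neg_smul, hadd R hR _ (L.smul_mem _ hI), hsmul _ 1 hI, hone, neg_smul,
      ← sub_eq_add_neg]
  simp_rw [numericalRange_eq_iInter_closedBall, ← hshift,
    hnorm _ (L.sub_mem hR (L.smul_mem _ hI))]
end
end

section
/- Let n ≥ 2, let A ∈ M_{n−1}(ℂ), let x, y ∈ ℂ^{n−1}, and let α ∈ ℂ be such that for all λ ≠ 0 the n×n block matrix T(λ) = [[x, A − λI_{n−1}], [α, yᵀ]] (first column x above α, with A − λI_{n−1} above the row vector yᵀ) satisfies rank(T(λ)) = rank(A − λI_{n−1}) = n − 1. Then α = 0, A is nilpotent, and yᵀ A^k x = 0 for all k = 0, 1, …, n−1. -/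
/-!
Full rank of `A - λ I` for every `λ ≠ 0` means `A` has no nonzero eigenvalue, so over `ℂ`
it is nilpotent. Since `T(λ)` is square of rank `n - 1`, its determinant vanishes, and the Schur
complement of the invertible block `A - λ I` gives `α = yᵀ (A - λ I)⁻¹ x`. Expanding the inverse
as the finite Neumann series `-∑ λ^{-(k+1)} A^k` turns this into a polynomial identity in `λ⁻¹`
that holds at infinitely many points, so all its coefficients `α` and `yᵀ A^k x` vanish.
-/

open scoped Matrix

noncomputable section

open Matrix Polynomial

namespace Matrix

variable {m : Type*} [Fintype m] [DecidableEq m]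

theorem isUnit_of_rank_eq_card {K : Type*} [Field K] {A : Matrix m m K}
    (h : A.rank = Fintype.card m) : IsUnit A := by
  refine mulVec_surjective_iff_isUnit.1 (LinearMap.range_eq_top (f := A.mulVecLin) |>.1 ?_)
  exact Submodule.eq_top_of_finrank_eq (by rw [← rank, h, Module.finrank_fintype_fun_eq_card])

theorem det_eq_zero_of_rank_lt_card {K : Type*} [Field K] {A : Matrix m m K}
    (h : A.rank < Fintype.card m) : A.det = 0 := by
  by_contra hA
  exact h.ne (rank_of_det_ne_zero hA)

theorem pow_card_eq_zero_of_forall_isUnit_sub_smul_one {K : Type*} [Field K] [IsAlgClosed K]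
    {A : Matrix m m K} (h : ∀ t : K, t ≠ 0 → IsUnit (A - t • 1)) :
    A ^ Fintype.card m = 0 := by
  have hroots : A.charpoly.roots = Multiset.replicate (Fintype.card m) 0 := by
    rw [Multiset.eq_replicate, ← A.charpoly_natDegree_eq_dim]
    refine ⟨(IsAlgClosed.splits A.charpoly).natDegree_eq_card_roots.symm, fun t ht => ?_⟩
    by_contra ht0
    have hdet := (isRoot_of_mem_roots ht).eq_zero
    have hu : IsUnit (-(A - t • 1)) := (h t ht0).neg
    rw [neg_sub, smul_one_eq_diagonal] at hu
    exact ((isUnit_iff_isUnit_det _).1 hu).ne_zero (by simpa [eval_charpoly] using hdet)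
  have hchar : A.charpoly = X ^ Fintype.card m := by
    rw [← prod_multiset_X_sub_C_of_monic_of_roots_card_eq A.charpoly_monic, hroots]
    · simp
    · exact (IsAlgClosed.splits A.charpoly).natDegree_eq_card_roots.symm
  simpa [hchar] using A.aeval_self_charpoly

theorem det_fromBlocks_replicateCol_replicateRow {R ι : Type*} [CommRing R] [Unique ι]
    [Fintype ι] [DecidableEq ι] {B : Matrix m m R} (hB : IsUnit B) (x y : m → R) (a : R) :
    (fromBlocks B (replicateCol ι x) (replicateRow ι y) (of fun _ _ => a)).det =
      B.det * (a - y ⬝ᵥ B⁻¹ *ᵥ x) := by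
  have := hB.invertible
  rw [det_fromBlocks₁₁, invOf_eq_nonsing_inv, Matrix.mul_assoc, ← replicateCol_mulVec,
    replicateRow_mul_replicateCol, det_unique (n := ι)]
  rfl

theorem eq_dotProduct_inv_mulVec_of_rank_fromBlocks {K : Type*} [Field K]
    {B : Matrix m m K} (hB : IsUnit B) (x y : m → K) (a : K)
    (hrank : (fromBlocks (replicateCol (Fin 1) x) B (of fun _ _ => a)
      (replicateRow (Fin 1) y)).rank = Fintype.card m) :
    a = y ⬝ᵥ B⁻¹ *ᵥ x := by
  have hswap : (fromBlocks (replicateCol (Fin 1) x) B (of fun _ _ => a)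
      (replicateRow (Fin 1) y)).submatrix (Equiv.refl _) (Equiv.sumComm m (Fin 1)) =
      fromBlocks B (replicateCol (Fin 1) x) (replicateRow (Fin 1) y) (of fun _ _ => a) := by
    ext (i | i) (j | j) <;> rfl
  have hdet := det_eq_zero_of_rank_lt_card (A := fromBlocks B (replicateCol (Fin 1) x)
    (replicateRow (Fin 1) y) (of fun _ _ => a))
    (by rw [← hswap, rank_submatrix, hrank, Fintype.card_sum, Fintype.card_fin]
        exact lt_add_one _)
  rw [det_fromBlocks_replicateCol_replicateRow hB] at hdet
  exact sub_eq_zero.1 ((mul_eq_zero.1 hdet).resolve_left ((isUnit_iff_isUnit_det B).1 hB).ne_zero)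

theorem inv_sub_inv_smul_one_of_pow_eq_zero {K : Type*} [Field K] {A : Matrix m m K} {M : ℕ}
    (hA : A ^ M = 0) {μ : K} (hμ : μ ≠ 0) :
    (A - μ⁻¹ • 1)⁻¹ = -μ • ∑ k ∈ Finset.range M, (μ • A) ^ k := by
  refine inv_eq_left_inv ?_
  have hgeom := geom_sum_mul (μ • A) M
  rw [_root_.smul_pow, hA, smul_zero, zero_sub] at hgeom
  have hscale : μ • (A - μ⁻¹ • 1) = μ • A - 1 := by
    rw [smul_sub, smul_smul, mul_inv_cancel₀ hμ, one_smul]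
  rw [neg_smul, Matrix.neg_mul, Matrix.smul_mul, ← Matrix.mul_smul, hscale, hgeom, neg_neg]

theorem dotProduct_inv_sub_inv_smul_one_mulVec_of_pow_eq_zero {K : Type*} [Field K]
    {A : Matrix m m K} {M : ℕ} (hA : A ^ M = 0) (x y : m → K) {μ : K} (hμ : μ ≠ 0) :
    y ⬝ᵥ (A - μ⁻¹ • 1)⁻¹ *ᵥ x =
      -∑ k ∈ Finset.range M, y ⬝ᵥ (A ^ k) *ᵥ x * μ ^ (k + 1) := by
  rw [inv_sub_inv_smul_one_of_pow_eq_zero hA hμ, neg_smul, neg_mulVec, dotProduct_neg,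
    smul_mulVec, Matrix.sum_mulVec, dotProduct_smul, dotProduct_sum, Finset.smul_sum]
  refine congrArg _ (Finset.sum_congr rfl fun k _ => ?_)
  rw [_root_.smul_pow, smul_mulVec, dotProduct_smul, smul_eq_mul, smul_eq_mul]
  ring

end Matrix

theorem Polynomial.eq_zero_of_forall_add_sum_mul_pow_eq_zero {K : Type*} [Field K] [Infinite K]
    {a : K} {c : ℕ → K} {M : ℕ}
    (h : ∀ μ : K, μ ≠ 0 → a + ∑ k ∈ Finset.range M, c k * μ ^ (k + 1) = 0) :
    a = 0 ∧ ∀ k < M, c k = 0 := by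
  set p : K[X] := C a + ∑ k ∈ Finset.range M, C (c k) * X ^ (k + 1)
  have hp : p = 0 := by
    refine eq_zero_of_infinite_isRoot p (Set.Infinite.mono (s := {0}ᶜ) (fun μ hμ => ?_)
      (Set.finite_singleton 0).infinite_compl)
    simpa [p, eval_finsetSum] using h μ hμ
  constructor
  · simpa [p, coeff_C, coeff_X_pow] using congrArg (coeff · 0) hp
  · intro k hk
    simpa [p, coeff_C, coeff_X_pow, hk] using congrArg (coeff · (k + 1)) hp

theorem stmt12_general (n : ℕ) (A : Matrix (Fin (n - 1)) (Fin (n - 1)) ℂ)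
    (x y : Fin (n - 1) → ℂ) (α : ℂ)
    (h : ∀ lam : ℂ, lam ≠ 0 →
      (Matrix.fromBlocks (Matrix.replicateCol (Fin 1) x) (A - lam • 1)
          (Matrix.of fun _ _ => α) (Matrix.replicateRow (Fin 1) y)).rank = n - 1 ∧
        (A - lam • (1 : Matrix (Fin (n - 1)) (Fin (n - 1)) ℂ)).rank = n - 1) :
    α = 0 ∧ IsNilpotent A ∧ ∀ k ≤ n - 1, y ⬝ᵥ (A ^ k).mulVec x = 0 := by
  have hunit : ∀ t : ℂ, t ≠ 0 → IsUnit (A - t • 1) := fun t ht =>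
    isUnit_of_rank_eq_card (by rw [(h t ht).2, Fintype.card_fin])
  have hnil : A ^ (n - 1) = 0 := by
    simpa using pow_card_eq_zero_of_forall_isUnit_sub_smul_one hunit
  have hseries : ∀ μ : ℂ, μ ≠ 0 →
      α + ∑ k ∈ Finset.range (n - 1), y ⬝ᵥ (A ^ k) *ᵥ x * μ ^ (k + 1) = 0 := by
    intro μ hμ
    have hμ' := inv_ne_zero hμ
    rw [eq_dotProduct_inv_mulVec_of_rank_fromBlocks (hunit _ hμ') x y α
        (by rw [(h _ hμ').1, Fintype.card_fin]),
      dotProduct_inv_sub_inv_smul_one_mulVec_of_pow_eq_zero hnil x y hμ, neg_add_cancel]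
  obtain ⟨hα, hcoeff⟩ := Polynomial.eq_zero_of_forall_add_sum_mul_pow_eq_zero hseries
  refine ⟨hα, ⟨n - 1, hnil⟩, fun k _ => ?_⟩
  rcases lt_or_ge k (n - 1) with hk | hk
  · exact hcoeff k hk
  · rw [pow_eq_zero_of_le hk hnil, zero_mulVec, dotProduct_zero]

theorem stmt12 (n : ℕ) (hn : 2 ≤ n) (A : Matrix (Fin (n - 1)) (Fin (n - 1)) ℂ)
    (x y : Fin (n - 1) → ℂ) (α : ℂ)
    (h : ∀ lam : ℂ, lam ≠ 0 →
      (Matrix.fromBlocks (Matrix.replicateCol (Fin 1) x) (A - lam • 1)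
          (Matrix.of fun _ _ => α) (Matrix.replicateRow (Fin 1) y)).rank = n - 1 ∧
        (A - lam • (1 : Matrix (Fin (n - 1)) (Fin (n - 1)) ℂ)).rank = n - 1) :
    α = 0 ∧ IsNilpotent A ∧ ∀ k ≤ n - 1, y ⬝ᵥ (A ^ k).mulVec x = 0 :=
  stmt12_general n A x y α h
end
end
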